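/- arXiv:2304.11089 — 7 statements merged into one kernel-verified Lean document; each statement's English description precedes it below -/
import Mathlib

section
/- Let n, a, b be integers with n ≥ a + b and 2 ≤ a ≤ b. Then C(n-1, a-1) + C(n-1, b-1) ≤ C(n, b) - C(n-a+1, b) + n - a + 1, where C denotes the binomial coefficient. -/
open Finset

lemma mono_half {n r s : ℕ} (hrs : r ≤ s) (hs : s ≤ n / 2) :
    n.choose r ≤ n.choose s := by
  induction s with
  | zero => rw [Nat.le_zero.mp hrs]
  | succ s ih =>
    rcases Nat.eq_or_lt_of_le hrs with h | h
    · rw [h]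
    · exact (ih (by omega) (by omega)).trans
        (Nat.choose_le_succ_of_lt_half_left (by omega))

lemma mono_lower {n r s : ℕ} (hrs : r ≤ s) (h : r + s ≤ n) :
    n.choose r ≤ n.choose s := by
  rcases le_or_gt s (n / 2) with hs | hs
  · exact mono_half hrs hs
  · rw [← Nat.choose_symm (by omega : s ≤ n)]
    exact mono_half (by omega) (by omega)

lemma key (c d e : ℕ) :
    (2*c+d+e+3).choose (c+1) + (2*c+d+e+3).choose (c+d+1) + (c+d+e+3).choose (c+d+2)
      ≤ (2*c+d+e+4).choose (c+d+2) + (c+d+e+3) := by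
  -- f1 : big choose as sum split
  have h1 : ∑ i ∈ Ico (c+d+1) (2*c+d+e+4), i.choose (c+d+1)
      = (2*c+d+e+4).choose (c+d+2) := by
    have := Nat.sum_Icc_choose (2*c+d+e+3) (c+d+1)
    rw [← Finset.Ico_add_one_right_eq_Icc] at this
    convert this using 2 <;> (ext; simp; omega)
  have h2 : ∑ i ∈ Ico (c+d+1) (c+d+e+3), i.choose (c+d+1)
      = (c+d+e+3).choose (c+d+2) := by
    have := Nat.sum_Icc_choose (c+d+e+2) (c+d+1)
    rw [← Finset.Ico_add_one_right_eq_Icc] at this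
    convert this using 2 <;> (ext; simp; omega)
  have hsplit : ∑ i ∈ Ico (c+d+1) (2*c+d+e+4), i.choose (c+d+1)
      = ∑ i ∈ Ico (c+d+1) (c+d+e+3), i.choose (c+d+1)
        + ∑ i ∈ Ico (c+d+e+3) (2*c+d+e+4), i.choose (c+d+1) :=
    (Finset.sum_Ico_consecutive _ (by omega) (by omega)).symm
  have htop : ∑ i ∈ Ico (c+d+e+3) (2*c+d+e+4), i.choose (c+d+1)
      = ∑ i ∈ Ico (c+d+e+3) (2*c+d+e+3), i.choose (c+d+1)
        + (2*c+d+e+3).choose (c+d+1) := by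
    have := Finset.sum_Ico_succ_top (by omega : c+d+e+3 ≤ 2*c+d+e+3)
      (fun i => i.choose (c+d+1))
    convert this using 3 <;> omega
  -- f2 : the a-side choose as sum
  have h3 : ∑ i ∈ Ico (c+d+e+1) (2*c+d+e+3), i.choose (c+d+e+1)
      = (2*c+d+e+3).choose (c+1) := by
    have := Nat.sum_Icc_choose (2*c+d+e+2) (c+d+e+1)
    rw [← Finset.Ico_add_one_right_eq_Icc] at this
    rw [show (2*c+d+e+3).choose (c+1) = (2*c+d+e+3).choose (c+d+e+2) by
      rw [← Nat.choose_symm (by omega : c+d+e+2 ≤ 2*c+d+e+3)]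
      congr 1; omega]
    convert this using 2 <;> (ext; simp; omega)
  have hbot : ∑ i ∈ Ico (c+d+e+1) (2*c+d+e+3), i.choose (c+d+e+1)
      = (c+d+e+3) + ∑ i ∈ Ico (c+d+e+3) (2*c+d+e+3), i.choose (c+d+e+1) := by
    rw [Finset.sum_eq_sum_Ico_succ_bot (by omega) (fun i => i.choose (c+d+e+1)),
      Finset.sum_eq_sum_Ico_succ_bot (by omega) (fun i => i.choose (c+d+e+1))]
    rw [Nat.choose_self]
    rw [show (c+d+e+1+1).choose (c+d+e+1) = c+d+e+2 by
      rw [← Nat.choose_symm (by omega : c+d+e+1 ≤ c+d+e+2)]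
      simp]
    rw [show c+d+e+1+1+1 = c+d+e+3 by omega]
    omega
  -- termwise comparison
  have hterm : ∑ i ∈ Ico (c+d+e+3) (2*c+d+e+3), i.choose (c+d+e+1)
      ≤ ∑ i ∈ Ico (c+d+e+3) (2*c+d+e+3), i.choose (c+d+1) := by
    apply Finset.sum_le_sum
    intro i hi
    rw [Finset.mem_Ico] at hi
    rw [← Nat.choose_symm (by omega : c+d+e+1 ≤ i)]
    exact mono_lower (by omega) (by omega)
  omega

theorem stmt_0 (n a b : ℕ) (hn : a + b ≤ n) (ha : 2 ≤ a) (hab : a ≤ b) :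
    (n - 1).choose (a - 1) + (n - 1).choose (b - 1) ≤
      n.choose b - (n - a + 1).choose b + n - a + 1 := by
  have h := key (a-2) (b-a) (n-a-b)
  rw [show 2*(a-2)+(b-a)+(n-a-b)+3 = n-1 by omega,
      show a-2+1 = a-1 by omega,
      show a-2+(b-a)+1 = b-1 by omega,
      show a-2+(b-a)+(n-a-b)+3 = n-a+1 by omega,
      show a-2+(b-a)+2 = b by omega,
      show 2*(a-2)+(b-a)+(n-a-b)+4 = n by omega] at h
  have hmono : (n-a+1).choose b ≤ n.choose b :=
    Nat.choose_le_choose b (by omega)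
  omega
end

section
/- Suppose F and G are families of finite subsets of [n] = {1,...,n} that are initial (downward closed in the shifting partial order) and cross-intersecting (every F ∈ F and G ∈ G satisfy F ∩ G ≠ ∅). Then the families F(1̄) = {F ∈ F : 1 ∉ F} and G(1̄) = {G ∈ G : 1 ∉ G} are cross 2-intersecting, i.e., |F ∩ G| ≥ 2 for all F ∈ F(1̄) and G ∈ G(1̄). -/
/-- The shifting partial order: `A ≼ B` iff they have the same size and the `i`-th
smallest element of `A` is at most the `i`-th smallest element of `B` for all `i`. -/
def ShiftLE (A B : Finset ℕ) : Prop :=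
  A.card = B.card ∧ ∀ i, (A.sort (· ≤ ·)).getD i 0 ≤ (B.sort (· ≤ ·)).getD i 0

/-- A family of subsets of `[n] = {1,…,n}` is initial if it is downward closed
in the shifting partial order. -/
def InitialFamily (n : ℕ) (𝓕 : Finset (Finset ℕ)) : Prop :=
  ∀ A B : Finset ℕ, A ⊆ Finset.Icc 1 n → ShiftLE A B → B ∈ 𝓕 → A ∈ 𝓕

private lemma erase_getD (l : List ℕ) (hs : l.Pairwise (· ≤ ·)) (x : ℕ) (hx : x ∈ l) :
    ∀ j, (l.erase x).getD j 0 ≤ l.getD (j + 1) 0 := by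
  induction l with
  | nil => simp at hx
  | cons a t ih =>
    intro j
    rcases eq_or_ne x a with rfl | hne
    · rw [List.erase_cons_head]
      simp
    · rw [List.erase_cons_tail (by simpa using (Ne.symm hne))]
      have hxt : x ∈ t := by
        rcases List.mem_cons.mp hx with h | h
        · exact absurd h hne
        · exact h
      have hst := (List.pairwise_cons.mp hs)
      cases j with
      | zero =>
        cases t with
        | nil => simp at hxt
        | cons b u =>
          simpa using hst.1 b (by simp)
      | succ j =>
        simpa using ih hst.2 hxt j

private lemma one_cons_erase_getD (l : List ℕ) (hs : l.Pairwise (· ≤ ·))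
    (h1 : ∀ a ∈ l, 1 ≤ a) (x : ℕ) (hx : x ∈ l) :
    ∀ i, (1 :: l.erase x).getD i 0 ≤ l.getD i 0 := by
  intro i
  cases i with
  | zero =>
    cases l with
    | nil => simp at hx
    | cons a t => simpa using h1 a (by simp)
  | succ i =>
    simpa using erase_getD l hs x hx i

theorem stmt_1 (n : ℕ) (𝓕 𝓖 : Finset (Finset ℕ))
    (h𝓕 : ∀ F ∈ 𝓕, F ⊆ Finset.Icc 1 n) (h𝓖 : ∀ G ∈ 𝓖, G ⊆ Finset.Icc 1 n)
    (init𝓕 : InitialFamily n 𝓕) (init𝓖 : InitialFamily n 𝓖)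
    (cross : ∀ F ∈ 𝓕, ∀ G ∈ 𝓖, (F ∩ G).Nonempty) :
    ∀ F ∈ 𝓕, 1 ∉ F → ∀ G ∈ 𝓖, 1 ∉ G → 2 ≤ (F ∩ G).card := by
  intro F hF h1F G hG h1G
  by_contra hlt
  push_neg at hlt
  have hne := cross F hF G hG
  have hcard : (F ∩ G).card = 1 := by
    have := Finset.card_pos.mpr hne
    omega
  obtain ⟨x, hxeq⟩ := Finset.card_eq_one.mp hcard
  have hxF : x ∈ F := (Finset.mem_inter.mp (hxeq ▸ Finset.mem_singleton_self x)).1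
  have hxG : x ∈ G := (Finset.mem_inter.mp (hxeq ▸ Finset.mem_singleton_self x)).2
  have hxIcc := h𝓕 F hF hxF
  have hx1 : 1 ≤ x := (Finset.mem_Icc.mp hxIcc).1
  have hxn : x ≤ n := (Finset.mem_Icc.mp hxIcc).2
  set A : Finset ℕ := insert 1 (F.erase x) with hA
  have h1notE : 1 ∉ F.erase x := fun h => h1F (Finset.mem_of_mem_erase h)
  have hAsub : A ⊆ Finset.Icc 1 n := by
    intro a ha
    rcases Finset.mem_insert.mp ha with rfl | h
    · exact Finset.mem_Icc.mpr ⟨le_refl 1, le_trans hx1 hxn⟩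
    · exact h𝓕 F hF (Finset.mem_of_mem_erase h)
  -- elements of F are ≥ 1
  have h1leF : ∀ a ∈ F, 1 ≤ a := fun a ha => (Finset.mem_Icc.mp (h𝓕 F hF ha)).1
  -- sort of A
  set l : List ℕ := F.sort (· ≤ ·) with hl
  have hl_sorted : l.Pairwise (· ≤ ·) := F.pairwise_sort _
  have hlmem : ∀ a, a ∈ l ↔ a ∈ F := fun a => Finset.mem_sort _
  have hxl : x ∈ l := (hlmem x).mpr hxF
  have hAsort : A.sort (· ≤ ·) = 1 :: l.erase x := by
    refine (fun h hs => List.Perm.eq_of_pairwise' (A.pairwise_sort _) hs h) ?_ ?_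
    · rw [← Multiset.coe_eq_coe]
      have h1 : (↑(A.sort (· ≤ ·)) : Multiset ℕ) = A.val := Finset.sort_eq _ _
      have h2 : (↑l : Multiset ℕ) = F.val := Finset.sort_eq _ _
      rw [h1]
      have : A.val = 1 ::ₘ (F.val.erase x) := by
        rw [hA, Finset.insert_val_of_notMem h1notE, Finset.erase_val]
      rw [this, ← h2]
      simp [Multiset.coe_erase]
    · rw [List.pairwise_cons]
      constructor
      · intro b hb
        exact h1leF b ((hlmem b).mp (List.mem_of_mem_erase hb))
      · exact hl_sorted.sublist (List.erase_sublist (a := x))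
  have hshift : ShiftLE A F := by
    constructor
    · rw [hA, Finset.card_insert_of_notMem h1notE, Finset.card_erase_of_mem hxF]
      have : 1 ≤ F.card := Finset.card_pos.mpr ⟨x, hxF⟩
      omega
    · intro i
      rw [hAsort]
      exact one_cons_erase_getD l hl_sorted (fun a ha => h1leF a ((hlmem a).mp ha)) x hxl i
  have hAmem : A ∈ 𝓕 := init𝓕 A F hAsub hshift hF
  obtain ⟨y, hy⟩ := cross A hAmem G hG
  rcases Finset.mem_insert.mp (Finset.mem_inter.mp hy).1 with rfl | h
  · exact h1G (Finset.mem_inter.mp hy).2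
  · have hyFG : y ∈ F ∩ G :=
      Finset.mem_inter.mpr ⟨Finset.mem_of_mem_erase h, (Finset.mem_inter.mp hy).2⟩
    have : y = x := Finset.mem_singleton.mp (hxeq ▸ hyFG)
    exact (Finset.mem_erase.mp h).1 (by rw [this])
end

section
/- Let F be an initial family of k-subsets of [n]. Then the shadow of F(1̄) is contained in F(1), i.e., every (k-1)-set obtained by removing one element from a member of F not containing 1 is of the form F \ {1} for some F ∈ F containing 1. -/
-- helpers
lemma erase_getD_le {L : List ℕ} (hL : L.Pairwise (· ≤ ·)) {j : ℕ} (hj : j ∈ L) :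
    ∀ i, (L.erase j).getD i 0 ≤ L.getD (i+1) 0 := by
  induction L with
  | nil => simp at hj
  | cons x L ih =>
    intro i
    by_cases hxj : x = j
    · subst hxj; simp [List.erase_cons_head]
    · rw [List.erase_cons_tail (by simpa using hxj)]
      have hjL : j ∈ L := by
        rcases List.mem_cons.1 hj with h | h
        · exact absurd h.symm hxj
        · exact h
      match i with
      | 0 =>
        simp only [List.getD_cons_zero, List.getD_cons_succ]
        rcases L with _ | ⟨y, L'⟩
        · simp at hjL
        · exact (List.pairwise_cons.1 hL).1 y (by simp)
      | Nat.succ i =>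
        simp only [List.getD_cons_succ]
        exact ih hL.of_cons hjL i

lemma sort_erase (F : Finset ℕ) (j : ℕ) :
    (F.erase j).sort (· ≤ ·) = (F.sort (· ≤ ·)).erase j := by
  refine List.Perm.eq_of_pairwise' (Finset.pairwise_sort _ _)
    ((Finset.pairwise_sort F (· ≤ ·)).erase _) ?_
  have h1 : ((F.erase j).sort (· ≤ ·) : Multiset ℕ) = (F.erase j).val := Finset.sort_eq _ _
  have h2 : ((F.sort (· ≤ ·)).erase j : Multiset ℕ) = (F.val).erase j := by
    rw [← Multiset.coe_erase, Finset.sort_eq]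
  rw [← Multiset.coe_eq_coe, h1, h2, Finset.erase_val]

/-- Every set in the shadow of `𝓕(1̄)` belongs to `𝓕(1)`: removing any element from a
member of `𝓕` not containing `1` and adding `1` back yields a member of `𝓕`. -/
theorem stmt_3 (n k : ℕ) (𝓕 : Finset (Finset ℕ))
    (hU : ∀ F ∈ 𝓕, F ⊆ Finset.Icc 1 n ∧ F.card = k)
    (init : InitialFamily n 𝓕) :
    ∀ F ∈ 𝓕, 1 ∉ F → ∀ j ∈ F, insert 1 (F.erase j) ∈ 𝓕 := by
  intro F hF h1F j hjF
  obtain ⟨hsub, _⟩ := hU F hF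
  have h1e : (1 : ℕ) ∉ F.erase j := fun h => h1F (Finset.mem_of_mem_erase h)
  have hjn := Finset.mem_Icc.1 (hsub hjF)
  refine init _ F ?_ ⟨?_, ?_⟩ hF
  · intro x hx
    rcases Finset.mem_insert.1 hx with rfl | hx
    · exact Finset.mem_Icc.2 ⟨le_refl 1, le_trans hjn.1 hjn.2⟩
    · exact hsub (Finset.mem_of_mem_erase hx)
  · rw [Finset.card_insert_of_notMem h1e, Finset.card_erase_of_mem hjF,
      Nat.sub_add_cancel (Finset.card_pos.2 ⟨j, hjF⟩)]
  · have hle : ∀ b ∈ F.erase j, 1 ≤ b := fun b hb =>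
      (Finset.mem_Icc.1 (hsub (Finset.mem_of_mem_erase hb))).1
    have hs : (insert 1 (F.erase j)).sort (· ≤ ·) = 1 :: (F.erase j).sort (· ≤ ·) :=
      Finset.sort_insert (· ≤ ·) hle h1e
    intro i
    rw [hs, sort_erase]
    have hjs : j ∈ F.sort (· ≤ ·) := (Finset.mem_sort _).2 hjF
    match i with
    | 0 =>
      rcases h : F.sort (· ≤ ·) with _ | ⟨x, L⟩
      · rw [h] at hjs; simp at hjs
      · have hx : x ∈ F := (Finset.mem_sort (α := ℕ) (· ≤ ·)).1 (by rw [h]; simp)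
        simpa using (Finset.mem_Icc.1 (hsub hx)).1
    | Nat.succ i =>
      simpa using erase_getD_le (Finset.pairwise_sort _ _) hjs i
end

section
/- Let F be an initial intersecting family of k-subsets of [n] with n > 2k. Then |F(1)| > |F(1̄)|, and consequently the maximum degree ratio ρ(F) = max_i |F(i)|/|F| exceeds 1/2. -/
open Finset



lemma cnt_getD (A : Finset ℕ) (idx : ℕ) (h : idx < A.card) :
    idx + 1 ≤ ((A.filter (· ≤ (A.sort (· ≤ ·)).getD idx 0))).card := by
  set l := A.sort (· ≤ ·) with hl
  have hlen : l.length = A.card := Finset.length_sort _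
  have hidx : idx < l.length := by omega
  have hsm : StrictMono l.get := (Finset.sortedLT_sort A).strictMono_get
  have hsub : (Finset.range (idx+1)).image (fun r => l.getD r 0) ⊆
      A.filter (· ≤ l.getD idx 0) := by
    intro a ha
    obtain ⟨r, hr, rfl⟩ := Finset.mem_image.1 ha
    have hr' : r < l.length := by have := Finset.mem_range.1 hr; omega
    rw [Finset.mem_filter]
    constructor
    · rw [List.getD_eq_getElem l 0 hr']
      exact (Finset.mem_sort _).1 (List.getElem_mem _)
    · rw [List.getD_eq_getElem l 0 hr', List.getD_eq_getElem l 0 hidx]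
      rcases eq_or_lt_of_le (Nat.lt_succ_iff.1 (Finset.mem_range.1 hr)) with h' | h'
      · simp [h']
      · exact le_of_lt (hsm (show (⟨r, hr'⟩ : Fin l.length) < ⟨idx, hidx⟩ from h'))
  have hinj : Set.InjOn (fun r => l.getD r 0) (Finset.range (idx+1)) := by
    intro r hr s hs hrs
    have hr' : r < l.length := by have := Finset.mem_range.1 hr; omega
    have hs' : s < l.length := by have := Finset.mem_range.1 hs; omega
    simp only [List.getD_eq_getElem l 0 hr', List.getD_eq_getElem l 0 hs'] at hrs
    have := hsm.injective (a₁ := ⟨r, hr'⟩) (a₂ := ⟨s, hs'⟩) (by simpa using hrs)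
    simpa using this
  calc idx + 1 = ((Finset.range (idx+1)).image (fun r => l.getD r 0)).card := by
        rw [Finset.card_image_of_injOn hinj, Finset.card_range]
    _ ≤ _ := Finset.card_le_card hsub

lemma getD_le_of_cnt (A : Finset ℕ) (idx x : ℕ)
    (h : idx + 1 ≤ (A.filter (· ≤ x)).card) : (A.sort (· ≤ ·)).getD idx 0 ≤ x := by
  set l := A.sort (· ≤ ·) with hl
  have hlen : l.length = A.card := Finset.length_sort _
  have hidx : idx < l.length := by
    have := Finset.card_le_card (Finset.filter_subset (· ≤ x) A)
    omega
  have hsm : StrictMono l.get := (Finset.sortedLT_sort A).strictMono_get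
  by_contra hx
  push_neg at hx
  have hsub : A.filter (· ≤ x) ⊆ (Finset.range idx).image (fun r => l.getD r 0) := by
    intro a ha
    obtain ⟨haA, hax⟩ := Finset.mem_filter.1 ha
    have : a ∈ l := (Finset.mem_sort _).2 haA
    obtain ⟨r, hr⟩ := List.mem_iff_get.1 this
    have hridx : (r : ℕ) < idx := by
      by_contra hge
      push_neg at hge
      have : l.get ⟨idx, hidx⟩ ≤ l.get r := by
        rcases eq_or_lt_of_le hge with h' | h'
        · apply le_of_eq; congr 1; exact Fin.ext (by simp [h'.symm])
        · exact le_of_lt (hsm h')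
      rw [hr] at this
      rw [List.getD_eq_getElem l 0 hidx] at hx
      have : l.get ⟨idx, hidx⟩ ≤ x := le_trans this hax
      simp only [List.get_eq_getElem] at this
      omega
    refine Finset.mem_image.2 ⟨r, Finset.mem_range.2 hridx, ?_⟩
    rw [List.getD_eq_getElem l 0 (lt_trans hridx hidx)]
    rw [← hr]; simp
  have hc1 := Finset.card_le_card hsub
  have hc2 : ((Finset.range idx).image (fun r => l.getD r 0)).card ≤ idx :=
    le_trans Finset.card_image_le (le_of_eq (Finset.card_range idx))
  omega


lemma shiftLE_of_cnt (A B : Finset ℕ) (hcard : A.card = B.card)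
    (h : ∀ x, (B.filter (· ≤ x)).card ≤ (A.filter (· ≤ x)).card) : ShiftLE A B := by
  refine ⟨hcard, fun idx => ?_⟩
  by_cases hidx : idx < B.card
  · exact getD_le_of_cnt A idx _ (le_trans (cnt_getD B idx hidx) (h _))
  · have : (B.sort (· ≤ ·)).length ≤ idx := by rw [Finset.length_sort]; omega
    rw [List.getD_eq_default _ _ this]
    have : (A.sort (· ≤ ·)).length ≤ idx := by rw [Finset.length_sort]; omega
    rw [List.getD_eq_default _ _ this]

lemma shiftLE_insert_erase {A : Finset ℕ} {i j : ℕ} (hij : i < j) (hiA : i ∉ A) (hjA : j ∈ A) :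
    ShiftLE (insert i (A.erase j)) A := by
  apply shiftLE_of_cnt
  · rw [Finset.card_insert_of_notMem (fun hc => hiA (Finset.mem_of_mem_erase hc)),
      Finset.card_erase_of_mem hjA]
    have : 1 ≤ A.card := Finset.card_pos.2 ⟨j, hjA⟩
    omega
  · intro x
    rw [Finset.filter_insert, Finset.filter_erase]
    by_cases hjx : j ≤ x
    · have hix : i ≤ x := le_of_lt (lt_of_lt_of_le hij hjx)
      rw [if_pos hix]
      have hjmem : j ∈ A.filter (· ≤ x) := Finset.mem_filter.2 ⟨hjA, hjx⟩
      rw [Finset.card_insert_of_notMem (fun hc => hiA (Finset.mem_of_mem_filter _ (Finset.mem_of_mem_erase hc))),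
        Finset.card_erase_of_mem hjmem]
      have : 1 ≤ (A.filter (· ≤ x)).card := Finset.card_pos.2 ⟨j, hjmem⟩
      omega
    · have hjer : (A.filter (· ≤ x)).erase j = A.filter (· ≤ x) :=
        Finset.erase_eq_of_notMem (fun hc => hjx (Finset.mem_filter.1 hc).2)
      rw [hjer]
      by_cases hix : i ≤ x
      · rw [if_pos hix]
        exact le_trans (Finset.card_le_card (Finset.subset_insert _ _)) le_rfl
      · rw [if_neg hix]


lemma lym_easy (𝒜 : Finset (Finset ℕ)) (G : Finset ℕ) (k : ℕ)
    (hA : ∀ A ∈ 𝒜, A ⊆ G ∧ A.card = k) :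
    𝒜.card * k ≤ (Finset.shadow 𝒜).card * (G.card + 1 - k) := by
  classical
  apply Finset.card_mul_le_card_mul (fun A B => B ⊆ A)
  · intro A hAmem
    obtain ⟨hAG, hAk⟩ := hA A hAmem
    have hsub : A.image (fun a => A.erase a) ⊆
        (Finset.shadow 𝒜).bipartiteAbove (fun A B => B ⊆ A) A := by
      intro B hB
      obtain ⟨a, ha, rfl⟩ := Finset.mem_image.1 hB
      exact (Finset.mem_bipartiteAbove _).2
        ⟨Finset.erase_mem_shadow hAmem ha, Finset.erase_subset _ _⟩
    have hinj : Set.InjOn (fun a => A.erase a) A := by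
      intro a ha b hb hab
      dsimp at hab
      by_contra hne
      have h2 : a ∈ A.erase b := Finset.mem_erase.2 ⟨hne, ha⟩
      rw [← hab] at h2
      exact (Finset.mem_erase.1 h2).1 rfl
    calc k = (A.image (fun a => A.erase a)).card := by
          rw [Finset.card_image_of_injOn hinj, hAk]
      _ ≤ _ := Finset.card_le_card hsub
  · intro B hB
    obtain ⟨A₀, hA₀, hBA₀, hcard⟩ := Finset.mem_shadow_iff_exists_mem_card_add_one.1 hB
    obtain ⟨hA₀G, hA₀k⟩ := hA A₀ hA₀
    have hBk : B.card + 1 = k := by rw [← hA₀k, hcard]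
    have hBG : B ⊆ G := hBA₀.trans hA₀G
    have key : ∀ A ∈ 𝒜.bipartiteBelow (fun A B => B ⊆ A) B,
        ∃ x, A \ B = {x} ∧ x ∈ G \ B ∧ A = insert x B := by
      intro A hAb
      obtain ⟨hAmem, hBA⟩ := (Finset.mem_bipartiteBelow _).1 hAb
      obtain ⟨hAG, hAk⟩ := hA A hAmem
      have h1 : (A \ B).card = 1 := by
        rw [Finset.card_sdiff_of_subset hBA]; omega
      obtain ⟨x, hx⟩ := Finset.card_eq_one.1 h1
      refine ⟨x, hx, ?_, ?_⟩
      · have : x ∈ A \ B := by rw [hx]; exact Finset.mem_singleton_self x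
        exact Finset.sdiff_subset_sdiff hAG le_rfl this
      · have := Finset.union_sdiff_of_subset hBA
        rw [hx] at this
        rw [← this, Finset.union_comm]
        rw [Finset.insert_eq]
    have hle : (𝒜.bipartiteBelow (fun A B => B ⊆ A) B).card ≤ (G \ B).card := by
      apply Finset.card_le_card_of_injOn (fun A => (A \ B).sup id)
      · intro A hAb
        obtain ⟨x, hx, hxG, _⟩ := key A hAb
        show (A \ B).sup id ∈ G \ B
        rw [hx]
        simpa using hxG
      · intro A hAb A' hAb' heq
        obtain ⟨x, hx, _, hAeq⟩ := key A hAb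
        obtain ⟨x', hx', _, hAeq'⟩ := key A' hAb'
        dsimp at heq
        rw [hx, hx'] at heq
        simp only [Finset.sup_singleton, id] at heq
        rw [hAeq, hAeq', heq]
    have hGB : (G \ B).card = G.card + 1 - k := by
      rw [Finset.card_sdiff_of_subset hBG]; omega
    omega


lemma katona (a : ℕ) : ∀ m : ℕ, ∀ k : ℕ, ∀ 𝒜 : Finset (Finset ℕ),
    (∀ A ∈ 𝒜, A ⊆ Finset.Icc a m ∧ A.card = k) →
    (∀ A ∈ 𝒜, ∀ B ∈ 𝒜, 2 ≤ (A ∩ B).card) →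
    (∀ A ∈ 𝒜, ∀ j ∈ A, ∀ i, a ≤ i → i < j → i ∉ A → insert i (A.erase j) ∈ 𝒜) →
    𝒜.Nonempty → 𝒜.card < (Finset.shadow 𝒜).card := by
  intro m
  induction m using Nat.strong_induction_on with
  | _ m IH =>
  intro k 𝒜 hA h2 hsh hne
  classical
  obtain ⟨A₀, hA₀⟩ := hne
  have hk2 : 2 ≤ k := by
    have := h2 A₀ hA₀ A₀ hA₀
    rwa [Finset.inter_self, (hA A₀ hA₀).2] at this
  by_cases hbase : m + 1 - a ≤ 2 * k - 2
  · -- base case via lym_easy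
    by_contra hcon
    push_neg at hcon
    have hG : (Finset.Icc a m).card = m + 1 - a := Nat.card_Icc a m
    have hlym := lym_easy 𝒜 (Finset.Icc a m) k hA
    have hApos : 1 ≤ 𝒜.card := Finset.card_pos.2 ⟨A₀, hA₀⟩
    have h1 : (Finset.Icc a m).card + 1 - k ≤ k - 1 := by omega
    have hchain : 𝒜.card * k ≤ 𝒜.card * (k - 1) :=
      le_trans hlym (le_trans (Nat.mul_le_mul_left _ h1) (Nat.mul_le_mul_right _ hcon))
    rw [mul_comm 𝒜.card k, mul_comm 𝒜.card (k - 1)] at hchain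
    have := Nat.le_of_mul_le_mul_right hchain (show 0 < 𝒜.card by omega)
    omega
  · push_neg at hbase
    have ham : a + 2 * k - 2 ≤ m := by omega
    have hm1 : 1 ≤ m := by omega
    set 𝒜₀ := 𝒜.filter (fun A => m ∉ A) with h𝒜₀def
    set ℬ := 𝒜.filter (fun A => m ∈ A) with hℬdef
    set 𝒜₁ := ℬ.image (fun A => A.erase m) with h𝒜₁def
    have h𝒜₀sub : ∀ A ∈ 𝒜₀, A ∈ 𝒜 ∧ m ∉ A := fun A hA' => Finset.mem_filter.1 hA'
    have hℬsub : ∀ A ∈ ℬ, A ∈ 𝒜 ∧ m ∈ A := fun A hA' => Finset.mem_filter.1 hA'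
    have hIccsub : ∀ A ∈ 𝒜, m ∉ A → A ⊆ Finset.Icc a (m - 1) := by
      intro A hAm hm x hx
      have hx1 := (hA A hAm).1 hx
      rw [Finset.mem_Icc] at hx1 ⊢
      have hxm : x ≠ m := fun h => hm (h ▸ hx)
      omega
    have h𝒜₀A : ∀ A ∈ 𝒜₀, A ⊆ Finset.Icc a (m - 1) ∧ A.card = k := by
      intro A hA'
      obtain ⟨hAm, hmA⟩ := h𝒜₀sub A hA'
      exact ⟨hIccsub A hAm hmA, (hA A hAm).2⟩
    have h𝒜₀2 : ∀ A ∈ 𝒜₀, ∀ B ∈ 𝒜₀, 2 ≤ (A ∩ B).card := fun A hA' B hB' =>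
      h2 A (h𝒜₀sub A hA').1 B (h𝒜₀sub B hB').1
    have h𝒜₀sh : ∀ A ∈ 𝒜₀, ∀ j ∈ A, ∀ i, a ≤ i → i < j → i ∉ A →
        insert i (A.erase j) ∈ 𝒜₀ := by
      intro A hA' j hj i hai hij hiA
      obtain ⟨hAm, hmA⟩ := h𝒜₀sub A hA'
      refine Finset.mem_filter.2 ⟨hsh A hAm j hj i hai hij hiA, ?_⟩
      intro hc
      rcases Finset.mem_insert.1 hc with h | h
      · have hjm : j ≤ m := (Finset.mem_Icc.1 ((hA A hAm).1 hj)).2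
        have hjm' : j ≠ m := fun he => hmA (he ▸ hj)
        omega
      · exact hmA (Finset.mem_of_mem_erase h)
    have fresh : ∀ A ∈ ℬ, ∀ B ∈ ℬ, ∃ i, i ∈ Finset.Icc a (m - 1) ∧ i ∉ A ∧ i ∉ B := by
      intro A hA' B hB'
      obtain ⟨hAm, hmA⟩ := hℬsub A hA'
      obtain ⟨hBm, hmB⟩ := hℬsub B hB'
      by_contra hcon
      push_neg at hcon
      have hsubAB : Finset.Icc a (m - 1) ⊆ (A ∪ B).erase m := by
        intro x hx
        have hxb := Finset.mem_Icc.1 hx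
        have hxm : x ≠ m := by omega
        rcases Classical.em (x ∈ A) with h | h
        · exact Finset.mem_erase.2 ⟨hxm, Finset.mem_union_left _ h⟩
        · exact Finset.mem_erase.2 ⟨hxm, Finset.mem_union_right _ (hcon x hx h)⟩
      have hcard1 : (Finset.Icc a (m - 1)).card = m - a := by
        rw [Nat.card_Icc]; omega
      have hu := Finset.card_union_add_card_inter A B
      have h2AB := h2 A hAm B hBm
      have hAk := (hA A hAm).2
      have hBk := (hA B hBm).2
      have hUB : (A ∪ B).card ≤ 2 * k - 2 := by rw [hAk, hBk] at hu; omega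
      have hmem : m ∈ A ∪ B := Finset.mem_union_left _ hmA
      have hcardAB : ((A ∪ B).erase m).card ≤ 2 * k - 3 := by
        rw [Finset.card_erase_of_mem hmem]; omega
      have := Finset.card_le_card hsubAB
      omega
    have h𝒜₁mem : ∀ C ∈ 𝒜₁, ∃ A, A ∈ ℬ ∧ C = A.erase m ∧ A = insert m C ∧ m ∉ C := by
      intro C hC
      obtain ⟨A, hA', rfl⟩ := Finset.mem_image.1 hC
      exact ⟨A, hA', rfl, (Finset.insert_erase (hℬsub A hA').2).symm,
        Finset.notMem_erase _ _⟩
    have h𝒜₁A : ∀ C ∈ 𝒜₁, C ⊆ Finset.Icc a (m - 1) ∧ C.card = k - 1 := by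
      intro C hC
      obtain ⟨A, hA', rfl, -, -⟩ := h𝒜₁mem C hC
      obtain ⟨hAm, hmA⟩ := hℬsub A hA'
      constructor
      · intro x hx
        obtain ⟨hxm, hxA⟩ := Finset.mem_erase.1 hx
        have hx1 := Finset.mem_Icc.1 ((hA A hAm).1 hxA)
        rw [Finset.mem_Icc]; omega
      · rw [Finset.card_erase_of_mem hmA, (hA A hAm).2]
    have h𝒜₁2 : ∀ C ∈ 𝒜₁, ∀ D ∈ 𝒜₁, 2 ≤ (C ∩ D).card := by
      intro C hC D hD
      obtain ⟨A, hA', rfl, hAins, hmC⟩ := h𝒜₁mem C hC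
      obtain ⟨B, hB', rfl, hBins, hmD⟩ := h𝒜₁mem D hD
      obtain ⟨hAm, hmA⟩ := hℬsub A hA'
      obtain ⟨hBm, hmB⟩ := hℬsub B hB'
      obtain ⟨i, hiIcc, hiA, hiB⟩ := fresh A hA' B hB'
      have hib := Finset.mem_Icc.1 hiIcc
      have hA'mem : insert i (A.erase m) ∈ 𝒜 :=
        hsh A hAm m hmA i hib.1 (by omega) hiA
      have h2' := h2 _ hA'mem B hBm
      have heq : insert i (A.erase m) ∩ B = A.erase m ∩ B.erase m := by
        ext x
        simp only [Finset.mem_inter, Finset.mem_insert, Finset.mem_erase]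
        constructor
        · rintro ⟨h1 | h1, h2⟩
          · exact absurd (h1 ▸ h2) hiB
          · exact ⟨h1, ⟨fun he => h1.1 he, h2⟩⟩
        · rintro ⟨h1, h2⟩
          exact ⟨Or.inr h1, h2.2⟩
      rw [heq] at h2'
      exact h2'
    have h𝒜₁sh : ∀ C ∈ 𝒜₁, ∀ j ∈ C, ∀ i, a ≤ i → i < j → i ∉ C →
        insert i (C.erase j) ∈ 𝒜₁ := by
      intro C hC j hj i hai hij hiC
      obtain ⟨A, hA', rfl, hAins, hmC⟩ := h𝒜₁mem C hC
      obtain ⟨hAm, hmA⟩ := hℬsub A hA'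
      obtain ⟨hjm, hjA⟩ := Finset.mem_erase.1 hj
      have hjle : j ≤ m - 1 := (Finset.mem_Icc.1 ((h𝒜₁A _ hC).1 hj)).2
      have him : i ≠ m := by omega
      have hiA : i ∉ A := by
        intro hc
        exact hiC (Finset.mem_erase.2 ⟨him, hc⟩)
      have hA'mem : insert i (A.erase j) ∈ 𝒜 := hsh A hAm j hjA i hai hij hiA
      have hmA' : m ∈ insert i (A.erase j) :=
        Finset.mem_insert.2 (Or.inr (Finset.mem_erase.2 ⟨fun he => hjm he.symm, hmA⟩))
      have hA'ℬ : insert i (A.erase j) ∈ ℬ := Finset.mem_filter.2 ⟨hA'mem, hmA'⟩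
      refine Finset.mem_image.2 ⟨insert i (A.erase j), hA'ℬ, ?_⟩
      ext x
      simp only [Finset.mem_erase, Finset.mem_insert]
      constructor
      · rintro ⟨hxm, hx | ⟨hxj, hxA⟩⟩
        · exact Or.inl hx
        · exact Or.inr ⟨hxj, hxm, hxA⟩
      · rintro (rfl | ⟨hxj, hxm, hxA⟩)
        · exact ⟨him, Or.inl rfl⟩
        · exact ⟨hxm, Or.inr ⟨hxj, hxA⟩⟩
    have hcardℬ : 𝒜₁.card = ℬ.card := by
      rw [h𝒜₁def]
      apply Finset.card_image_of_injOn
      intro A hA' B hB' hab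
      dsimp at hab
      have h1 := (hℬsub A hA').2
      have h2' := (hℬsub B hB').2
      rw [← Finset.insert_erase h1, hab, Finset.insert_erase h2']
    -- shadow pieces
    have hsh0 : Finset.shadow 𝒜₀ ⊆ Finset.shadow 𝒜 :=
      Finset.shadow_monotone (Finset.filter_subset _ _)
    have hnm0 : ∀ B ∈ Finset.shadow 𝒜₀, m ∉ B := by
      intro B hB
      obtain ⟨A, hA', hBA⟩ := Finset.exists_subset_of_mem_shadow hB
      exact fun hc => (h𝒜₀sub A hA').2 (hBA hc)
    have hins : ∀ C ∈ Finset.shadow 𝒜₁, m ∉ C ∧ insert m C ∈ Finset.shadow 𝒜 := by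
      intro C hC
      rw [Finset.mem_shadow_iff] at hC
      obtain ⟨D, hD, x, hxD, rfl⟩ := hC
      obtain ⟨A, hA', rfl, hAins, hmD⟩ := h𝒜₁mem D hD
      obtain ⟨hAm, hmA⟩ := hℬsub A hA'
      have hxA : x ∈ A := Finset.mem_of_mem_erase hxD
      have hxm : x ≠ m := (Finset.mem_erase.1 hxD).1
      have hmC : m ∉ (A.erase m).erase x :=
        fun hc => Finset.notMem_erase m A (Finset.mem_of_mem_erase hc)
      refine ⟨hmC, ?_⟩
      have heq : insert m ((A.erase m).erase x) = A.erase x := by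
        ext z
        simp only [Finset.mem_insert, Finset.mem_erase]
        constructor
        · rintro (rfl | ⟨hzx, hzm, hzA⟩)
          · exact ⟨fun he => hxm he.symm, hmA⟩
          · exact ⟨hzx, hzA⟩
        · rintro ⟨hzx, hzA⟩
          by_cases hzm : z = m
          · exact Or.inl hzm
          · exact Or.inr ⟨hzx, hzm, hzA⟩
      rw [heq]
      exact Finset.erase_mem_shadow hAm hxA
    have himcard : ((Finset.shadow 𝒜₁).image (insert m)).card = (Finset.shadow 𝒜₁).card := by
      apply Finset.card_image_of_injOn
      intro C hC D hD hCD
      rw [← Finset.erase_insert (hins C hC).1, hCD, Finset.erase_insert (hins D hD).1]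
    have hdisj : Disjoint (Finset.shadow 𝒜₀) ((Finset.shadow 𝒜₁).image (insert m)) := by
      rw [Finset.disjoint_left]
      intro B hB hB'
      obtain ⟨C, hC, rfl⟩ := Finset.mem_image.1 hB'
      exact hnm0 _ hB (Finset.mem_insert_self _ _)
    have hcup : Finset.shadow 𝒜₀ ∪ (Finset.shadow 𝒜₁).image (insert m) ⊆ Finset.shadow 𝒜 := by
      apply Finset.union_subset hsh0
      intro B hB'
      obtain ⟨C, hC, rfl⟩ := Finset.mem_image.1 hB'
      exact (hins C hC).2
    have hshcard : (Finset.shadow 𝒜₀).card + (Finset.shadow 𝒜₁).card ≤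
        (Finset.shadow 𝒜).card := by
      calc (Finset.shadow 𝒜₀).card + (Finset.shadow 𝒜₁).card
          = (Finset.shadow 𝒜₀ ∪ (Finset.shadow 𝒜₁).image (insert m)).card := by
            rw [Finset.card_union_of_disjoint hdisj, himcard]
        _ ≤ _ := Finset.card_le_card hcup
    by_cases hℬe : ℬ = ∅
    · have hall : ∀ A ∈ 𝒜, m ∉ A := by
        intro A hAm hc
        have : A ∈ ℬ := Finset.mem_filter.2 ⟨hAm, hc⟩
        rw [hℬe] at this
        exact absurd this (Finset.notMem_empty _)
      exact IH (m - 1) (by omega) k 𝒜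
        (fun A hAm => ⟨hIccsub A hAm (hall A hAm), (hA A hAm).2⟩) h2 hsh ⟨A₀, hA₀⟩
    · have hℬne : ℬ.Nonempty := Finset.nonempty_iff_ne_empty.2 hℬe
      by_cases h𝒜₀e : 𝒜₀ = ∅
      · exfalso
        obtain ⟨A, hA'⟩ := hℬne
        obtain ⟨hAm, hmA⟩ := hℬsub A hA'
        obtain ⟨i, hiIcc, hiA, -⟩ := fresh A hA' A hA'
        have hib := Finset.mem_Icc.1 hiIcc
        have hA'mem : insert i (A.erase m) ∈ 𝒜 :=
          hsh A hAm m hmA i hib.1 (by omega) hiA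
        have hmnot : m ∉ insert i (A.erase m) := by
          intro hc
          rcases Finset.mem_insert.1 hc with h | h
          · omega
          · exact Finset.notMem_erase _ _ h
        have : insert i (A.erase m) ∈ 𝒜₀ := Finset.mem_filter.2 ⟨hA'mem, hmnot⟩
        rw [h𝒜₀e] at this
        exact absurd this (Finset.notMem_empty _)
      · have h𝒜₀ne : 𝒜₀.Nonempty := Finset.nonempty_iff_ne_empty.2 h𝒜₀e
        have h𝒜₁ne : 𝒜₁.Nonempty := hℬne.image _
        have IH0 := IH (m - 1) (by omega) k 𝒜₀ h𝒜₀A h𝒜₀2 h𝒜₀sh h𝒜₀ne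
        have IH1 := IH (m - 1) (by omega) (k - 1) 𝒜₁ h𝒜₁A h𝒜₁2 h𝒜₁sh h𝒜₁ne
        have hsplit : ℬ.card + 𝒜₀.card = 𝒜.card := by
          rw [h𝒜₀def, hℬdef]
          exact Finset.card_filter_add_card_filter_not (p := fun A => m ∈ A)
        omega

theorem stmt_4 (n k : ℕ) (hn : 2 * k < n) (𝓕 : Finset (Finset ℕ)) (hne : 𝓕.Nonempty)
    (hU : ∀ F ∈ 𝓕, F ⊆ Finset.Icc 1 n ∧ F.card = k)
    (hint : ∀ F ∈ 𝓕, ∀ F' ∈ 𝓕, (F ∩ F').Nonempty)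
    (init : InitialFamily n 𝓕) :
    (𝓕.filter (fun F => 1 ∉ F)).card < (𝓕.filter (fun F => 1 ∈ F)).card ∧
      ∃ i ∈ Finset.Icc 1 n, 𝓕.card < 2 * (𝓕.filter (fun F => i ∈ F)).card := by
  obtain ⟨F₀, hF₀⟩ := hne
  have hk1 : 1 ≤ k := by
    obtain ⟨x, hx⟩ := hint F₀ hF₀ F₀ hF₀
    have h1 : F₀.Nonempty := ⟨x, (Finset.mem_inter.1 hx).1⟩
    have h2 := Finset.card_pos.2 h1
    rw [(hU F₀ hF₀).2] at h2
    exact h2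
  have hn1 : 1 ≤ n := by omega
  have hkey : (𝓕.filter (fun F => 1 ∉ F)).card < (𝓕.filter (fun F => 1 ∈ F)).card := by
    set 𝒜 := 𝓕.filter (fun F => 1 ∉ F) with h𝒜def
    set ℬ := 𝓕.filter (fun F => 1 ∈ F) with hℬdef
    have hmemF : ∀ A ∈ 𝒜, A ∈ 𝓕 ∧ 1 ∉ A := fun A h => Finset.mem_filter.1 h
    by_cases h𝒜e : 𝒜 = ∅
    · rw [h𝒜e]
      simp only [Finset.card_empty]
      apply Finset.card_pos.2
      have h1F : 1 ∈ F₀ := by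
        by_contra hc
        have : F₀ ∈ 𝒜 := Finset.mem_filter.2 ⟨hF₀, hc⟩
        rw [h𝒜e] at this
        exact absurd this (Finset.notMem_empty _)
      exact ⟨F₀, Finset.mem_filter.2 ⟨hF₀, h1F⟩⟩
    · have h𝒜ne : 𝒜.Nonempty := Finset.nonempty_iff_ne_empty.2 h𝒜e
      have h𝒜A : ∀ A ∈ 𝒜, A ⊆ Finset.Icc 2 n ∧ A.card = k := by
        intro A hA'
        obtain ⟨hAF, h1A⟩ := hmemF A hA'
        refine ⟨?_, (hU A hAF).2⟩
        intro x hx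
        have hx1 := Finset.mem_Icc.1 ((hU A hAF).1 hx)
        have : x ≠ 1 := fun he => h1A (he ▸ hx)
        rw [Finset.mem_Icc]; omega
      have hIcc1 : ∀ A ∈ 𝓕, ∀ x, x ∈ A → 1 ≤ x ∧ x ≤ n := by
        intro A hA' x hx
        exact Finset.mem_Icc.1 ((hU A hA').1 hx)
      -- the key replacement move: if 1 ∉ A, x ∈ A, then insert 1 (A.erase x) ∈ 𝓕
      have hmove : ∀ A ∈ 𝓕, ∀ x ∈ A, ∀ i, i < x → i ∉ A → 1 ≤ i →
          insert i (A.erase x) ∈ 𝓕 := by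
        intro A hA' x hx i hix hiA hi1
        apply init _ A _ (shiftLE_insert_erase hix hiA hx) hA'
        intro z hz
        rcases Finset.mem_insert.1 hz with rfl | hz'
        · have := (hIcc1 A hA' x hx).2
          rw [Finset.mem_Icc]; omega
        · exact (hU A hA').1 (Finset.mem_of_mem_erase hz')
      have h2 : ∀ A ∈ 𝒜, ∀ B ∈ 𝒜, 2 ≤ (A ∩ B).card := by
        intro A hA' B hB'
        obtain ⟨hAF, h1A⟩ := hmemF A hA'
        obtain ⟨hBF, h1B⟩ := hmemF B hB'
        by_contra hc
        push_neg at hc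
        obtain ⟨y, hy⟩ := hint A hAF B hBF
        have hcard1 : (A ∩ B).card = 1 := by
          have := Finset.card_pos.2 ⟨y, hy⟩
          omega
        obtain ⟨x, hxeq⟩ := Finset.card_eq_one.1 hcard1
        have hxAB : x ∈ A ∩ B := hxeq ▸ Finset.mem_singleton_self x
        have hxA : x ∈ A := (Finset.mem_inter.1 hxAB).1
        have hxB : x ∈ B := (Finset.mem_inter.1 hxAB).2
        have hx1 : 1 < x := by
          have h1le := (hIcc1 A hAF x hxA).1
          have : x ≠ 1 := fun he => h1A (he ▸ hxA)
          omega
        have hA'F : insert 1 (A.erase x) ∈ 𝓕 := hmove A hAF x hxA 1 hx1 h1A le_rfl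
        obtain ⟨y', hy'⟩ := hint _ hA'F B hBF
        obtain ⟨hy'A, hy'B⟩ := Finset.mem_inter.1 hy'
        rcases Finset.mem_insert.1 hy'A with rfl | hy''
        · exact h1B hy'B
        · obtain ⟨hy'x, hy'Amem⟩ := Finset.mem_erase.1 hy''
          have : y' ∈ A ∩ B := Finset.mem_inter.2 ⟨hy'Amem, hy'B⟩
          rw [hxeq] at this
          exact hy'x (Finset.mem_singleton.1 this)
      have hshift : ∀ A ∈ 𝒜, ∀ j ∈ A, ∀ i, 2 ≤ i → i < j → i ∉ A →
          insert i (A.erase j) ∈ 𝒜 := by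
        intro A hA' j hj i hi2 hij hiA
        obtain ⟨hAF, h1A⟩ := hmemF A hA'
        refine Finset.mem_filter.2 ⟨hmove A hAF j hj i hij hiA (by omega), ?_⟩
        intro hc
        rcases Finset.mem_insert.1 hc with h | h
        · omega
        · exact h1A (Finset.mem_of_mem_erase h)
      have hkat := katona 2 n k 𝒜 h𝒜A h2 hshift h𝒜ne
      have hinj : (Finset.shadow 𝒜).card ≤ ℬ.card := by
        apply Finset.card_le_card_of_injOn (insert 1)
        · intro C hC
          rw [Finset.mem_coe, Finset.mem_shadow_iff] at hC
          obtain ⟨A, hA', x, hxA, rfl⟩ := hC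
          obtain ⟨hAF, h1A⟩ := hmemF A hA'
          have hx1 : 1 < x := by
            have := (Finset.mem_Icc.1 ((h𝒜A A hA').1 hxA)).1
            omega
          refine Finset.mem_filter.2 ⟨hmove A hAF x hxA 1 hx1 h1A le_rfl, ?_⟩
          exact Finset.mem_insert_self _ _
        · intro C hC D hD hCD
          have h1C : 1 ∉ C := by
            obtain ⟨A, hA', hCA⟩ := Finset.exists_subset_of_mem_shadow hC
            exact fun hc => (hmemF A hA').2 (hCA hc)
          have h1D : 1 ∉ D := by
            obtain ⟨A, hA', hDA⟩ := Finset.exists_subset_of_mem_shadow hD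
            exact fun hc => (hmemF A hA').2 (hDA hc)
          rw [← Finset.erase_insert h1C, hCD, Finset.erase_insert h1D]
      omega
  refine ⟨hkey, 1, Finset.mem_Icc.2 ⟨le_rfl, hn1⟩, ?_⟩
  have hsplit : (𝓕.filter (fun F => 1 ∈ F)).card +
      (𝓕.filter (fun F => ¬ 1 ∈ F)).card = 𝓕.card :=
    Finset.card_filter_add_card_filter_not (p := fun F => 1 ∈ F)
  have : (𝓕.filter (fun F => ¬ 1 ∈ F)) = (𝓕.filter (fun F => 1 ∉ F)) := rfl
  rw [this] at hsplit
  omega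
end

section
/- Let F, G ⊂ binom([n], k) be cross-intersecting with F(x,y) full for all (x,y) with x ∈ {x1,x2}, y ∈ {y1,y2}, where x1,x2,y1,y2 are distinct elements of [n] and 'full' means F(x,y) = binom([n] \ {x,y}, k-2). Then every G ∈ G contains {x1,x2} or {y1,y2}. -/
theorem stmt_15 (n k : ℕ) (hn : 2 * k + 2 ≤ n) (𝓕 𝓖 : Finset (Finset ℕ))
    (h𝓕 : ∀ F ∈ 𝓕, F ⊆ Finset.Icc 1 n ∧ F.card = k)
    (h𝓖 : ∀ G ∈ 𝓖, G ⊆ Finset.Icc 1 n ∧ G.card = k)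
    (cross : ∀ F ∈ 𝓕, ∀ G ∈ 𝓖, (F ∩ G).Nonempty)
    (x₁ x₂ y₁ y₂ : ℕ)
    (hx₁ : x₁ ∈ Finset.Icc 1 n) (hx₂ : x₂ ∈ Finset.Icc 1 n)
    (hy₁ : y₁ ∈ Finset.Icc 1 n) (hy₂ : y₂ ∈ Finset.Icc 1 n)
    (hdist : ({x₁, x₂, y₁, y₂} : Finset ℕ).card = 4)
    (hfull : ∀ x ∈ ({x₁, x₂} : Finset ℕ), ∀ y ∈ ({y₁, y₂} : Finset ℕ),
      ∀ C : Finset ℕ, C ⊆ (Finset.Icc 1 n) \ {x, y} → C.card = k - 2 →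
        insert x (insert y C) ∈ 𝓕) :
    ∀ G ∈ 𝓖, ({x₁, x₂} : Finset ℕ) ⊆ G ∨ ({y₁, y₂} : Finset ℕ) ⊆ G := by
  intro G hG
  by_contra hcon
  push_neg at hcon
  obtain ⟨h1, h2⟩ := hcon
  obtain ⟨x, hx, hxG⟩ := Finset.not_subset.mp h1
  obtain ⟨y, hy, hyG⟩ := Finset.not_subset.mp h2
  obtain ⟨hGsub, hGcard⟩ := h𝓖 G hG
  set S : Finset ℕ := Finset.Icc 1 n \ (insert x (insert y G)) with hS
  have hScard : k - 2 ≤ S.card := by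
    have h1 : (insert x (insert y G)).card ≤ k + 2 := by
      calc (insert x (insert y G)).card ≤ (insert y G).card + 1 :=
            Finset.card_insert_le _ _
        _ ≤ G.card + 1 + 1 := by
            have := Finset.card_insert_le y G; omega
        _ = k + 2 := by omega
    have h2 : (Finset.Icc 1 n).card = n := by simp
    have h3 : (Finset.Icc 1 n).card - (insert x (insert y G)).card ≤ S.card :=
      Finset.le_card_sdiff _ _
    omega
  obtain ⟨C, hCS, hCcard⟩ := Finset.exists_subset_card_eq hScard
  have hxy : ∀ z ∈ ({x₁, x₂} : Finset ℕ), z ∈ Finset.Icc 1 n := by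
    intro z hz
    simp only [Finset.mem_insert, Finset.mem_singleton] at hz
    rcases hz with rfl | rfl <;> assumption
  have hCsub : C ⊆ Finset.Icc 1 n \ {x, y} := by
    intro c hc
    have := hCS hc
    simp only [hS, Finset.mem_sdiff, Finset.mem_insert, Finset.mem_singleton] at this ⊢
    tauto
  have hF : insert x (insert y C) ∈ 𝓕 := hfull x hx y hy C hCsub hCcard
  have hne := cross _ hF G hG
  obtain ⟨z, hz⟩ := hne
  simp only [Finset.mem_inter, Finset.mem_insert] at hz
  obtain ⟨hz1, hz2⟩ := hz
  rcases hz1 with rfl | rfl | hzC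
  · exact hxG hz2
  · exact hyG hz2
  · have := hCS hzC
    simp only [hS, Finset.mem_sdiff, Finset.mem_insert] at this
    exact this.2 (Or.inr (Or.inr hz2))
end

section
/- Let n, a, b, r be positive integers with n ≥ a + b, a < b, and let A ⊂ binom([n], a), B ⊂ binom([n], b) be cross-intersecting families with |A| ≥ r. If 1 ≤ r ≤ b − 1, then |A| + |B| ≤ C(n, b) − C(n−a+1, b) + C(n−a−r+1, b−r) + r. If b ≤ r ≤ n − a + 1, then |A| + |B| ≤ C(n, b) − C(n−a+1, b) + n − a + 1. -/
attribute [-instance] instDecidableEqFin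

open Finset Nat Finset.Colex
open scoped FinsetFamily

namespace Stmt16

lemma aux_mono {s i j : ℕ} (hij : i ≤ j) (hs : 2 * j ≤ s) : s.choose i ≤ s.choose j := by
  induction j with
  | zero =>
    have : i = 0 := by omega
    subst this; exact le_rfl
  | succ j ih =>
    rcases Nat.eq_or_lt_of_le hij with rfl | h
    · exact le_rfl
    · exact (ih (by omega) (by omega)).trans
        (Nat.choose_le_succ_of_lt_half_left (by omega))

lemma half_mono {s i j : ℕ} (hij : i ≤ j) (hs : i + j ≤ s) : s.choose i ≤ s.choose j := by
  rcases le_or_gt (2 * j) s with h | h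
  · exact aux_mono hij h
  · have hjs : j ≤ s := by omega
    have h1 : s.choose (s - j) = s.choose j := Nat.choose_symm hjs
    calc s.choose i ≤ s.choose (s - j) := aux_mono (by omega) (by omega)
      _ = s.choose j := h1

lemma choose_flip {b q s : ℕ} (hbq : b ≤ q) (hs : s ≤ q + b) : s.choose q ≤ s.choose b := by
  rcases lt_or_ge s q with h | h
  · simp [Nat.choose_eq_zero_of_lt h]
  · calc s.choose q = s.choose (s - (s - q)) := by rw [Nat.sub_sub_self h]
      _ = s.choose (s - q) := Nat.choose_symm (by omega)
      _ ≤ s.choose b := half_mono (by omega) (by omega)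

lemma telescope {q b W V : ℕ} (hb : 1 ≤ b) (hbq : b ≤ q) (e0 : ℕ)
    (base : e0.choose q + V ≤ e0.choose b + W) :
    ∀ d, e0 + d ≤ q + b - 1 → (e0 + d).choose q + V ≤ (e0 + d).choose b + W := by
  intro d
  induction d with
  | zero => intro _; simpa using base
  | succ d ih =>
    intro hd
    have ihd := ih (by omega)
    have h1 : (e0 + (d+1)) = (e0 + d) + 1 := by omega
    have hq : q - 1 + 1 = q := by omega
    have hbb : b - 1 + 1 = b := by omega
    have p1 : ((e0 + d) + 1).choose q = (e0+d).choose (q-1) + (e0+d).choose q := by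
      conv_lhs => rw [← hq]
      rw [Nat.choose_succ_succ']
      rw [hq]
    have p2 : ((e0 + d) + 1).choose b = (e0+d).choose (b-1) + (e0+d).choose b := by
      conv_lhs => rw [← hbb]
      rw [Nat.choose_succ_succ']
      rw [hbb]
    have hf : (e0+d).choose (q-1) ≤ (e0+d).choose (b-1) :=
      choose_flip (by omega) (by omega)
    rw [h1, p1, p2]
    omega

lemma telescope' {q b W V e0 e : ℕ} (hb : 1 ≤ b) (hbq : b ≤ q)
    (base : e0.choose q + V ≤ e0.choose b + W) (h1 : e0 ≤ e) (h2 : e ≤ q + b - 1) :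
    e.choose q + V ≤ e.choose b + W := by
  have := telescope hb hbq e0 base (e - e0) (by omega)
  rwa [Nat.add_sub_cancel' h1] at this

lemma qp1 {q b r : ℕ} (hr1 : 1 ≤ r) (hrb : r + 1 ≤ b) (hbq : b ≤ q) :
    q + 1 ≤ (q - r + 1).choose (b - r) + r := by
  have h : (q - r + 1).choose 1 ≤ (q - r + 1).choose (b - r) :=
    half_mono (by omega) (by omega)
  rw [Nat.choose_one_right] at h
  omega

lemma A2' {q b e : ℕ} (hb : 2 ≤ b) (hbq : b ≤ q) (he1 : q + 1 ≤ e) (he2 : e ≤ q + b - 1) :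
    e.choose q + (q+1).choose b ≤ e.choose b + (q + 1) := by
  refine telescope' (by omega) hbq ?_ he1 he2
  have : (q+1).choose q = q + 1 := by
    rw [← Nat.choose_symm (by omega : q ≤ q + 1)]
    simp
  rw [this]
  omega

lemma A4 {q b e : ℕ} (hb : 1 ≤ b) (hbq : b ≤ q) (he1 : q ≤ e) (he2 : e ≤ q + b - 1) :
    e.choose q + q.choose b ≤ e.choose b + 1 := by
  refine telescope' hb hbq ?_ he1 he2
  simp [Nat.choose_self]
  omega

lemma A3 {q b r e : ℕ} (hr1 : 1 ≤ r) (hrb : r + 1 ≤ b) (hbq : b ≤ q)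
    (he1 : q ≤ e) (he2 : e ≤ q + b - 2) :
    e.choose q + q.choose b ≤ e.choose b + (q - r).choose (b - r) := by
  refine telescope' (by omega) hbq ?_ he1 (by omega)
  have : 0 < (q - r).choose (b - r) := Nat.choose_pos (by omega)
  simp [Nat.choose_self]
  omega

lemma pascal_q1b {q b : ℕ} (hb : 1 ≤ b) : (q+1).choose b = q.choose (b-1) + q.choose b := by
  have hbb : b - 1 + 1 = b := by omega
  conv_lhs => rw [← hbb, Nat.choose_succ_succ', hbb]

lemma A56 {q b e : ℕ} (hb : 2 ≤ b) (hbq : b ≤ q) (he1 : q + 1 ≤ e) (he2 : e ≤ q + b - 1) :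
    e.choose q + q.choose b + (q-1).choose (b-2) ≤ e.choose b + q := by
  rw [add_assoc]
  refine telescope' (by omega) hbq ?_ he1 he2
  have p1 : (q+1).choose b = q.choose (b-1) + q.choose b := pascal_q1b (by omega)
  have p2 : q.choose (b-1) = (q-1).choose (b-2) + (q-1).choose (b-1) := by
    have h1 : q - 1 + 1 = q := by omega
    have h2 : b - 2 + 1 = b - 1 := by omega
    conv_lhs => rw [← h1, ← h2, Nat.choose_succ_succ', h2]
  have p3 : 0 < (q-1).choose (b-1) := Nat.choose_pos (by omega)
  have : (q+1).choose q = q + 1 := by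
    rw [← Nat.choose_symm (by omega : q ≤ q + 1)]; simp
  rw [this]
  omega

lemma phi_chain {q b m : ℕ} (hm1 : 1 ≤ m) (hmb : m ≤ b - 1) (hb : 2 ≤ b) (hbq : b ≤ q) :
    (q - m).choose (b - m - 1) + m ≤ (q-1).choose (b-2) + 1 := by
  induction m with
  | zero => omega
  | succ m ih =>
    rcases Nat.eq_or_lt_of_le hm1 with h | h
    · rw [← h]
      simp [Nat.sub_sub]
    · have hm : 1 ≤ m := by omega
      have step : (q - (m+1)).choose (b - (m+1) - 1) + 1 ≤ (q - m).choose (b - m - 1) := by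
        have h1 : q - m = (q - (m+1)) + 1 := by omega
        have h2 : b - m - 1 = (b - (m+1) - 1) + 1 := by omega
        rw [h1, h2, Nat.choose_succ_succ']
        have : 0 < (q - (m+1)).choose (b - (m+1) - 1 + 1) := Nat.choose_pos (by omega)
        omega
      have := ih hm (by omega)
      omega

lemma A5 {q b r mp e : ℕ} (hmp : 1 ≤ mp) (hmpr : mp < r) (hrb : r + 1 ≤ b) (hbq : b ≤ q)
    (he1 : q ≤ e) (he2 : e ≤ q + b - 2) (side : r ≤ e.choose q + mp) :
    e.choose q + (q+1).choose b + (q - mp).choose (b - mp - 1) + mp ≤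
      e.choose b + q.choose (b-1) + (q - r + 1).choose (b - r) + r := by
  have pas : (q+1).choose b = q.choose (b-1) + q.choose b := pascal_q1b (by omega)
  rcases Nat.eq_or_lt_of_le he1 with h | h
  · -- e = q
    subst h
    rw [Nat.choose_self] at side ⊢
    have hr : r = mp + 1 := by omega
    subst hr
    have hx : q - mp = q - (mp+1) + 1 := by omega
    have hy : b - mp - 1 = b - (mp + 1) := by omega
    rw [hx, hy]
    omega
  · have h56 : e.choose q + q.choose b + (q-1).choose (b-2) ≤ e.choose b + q :=
      A56 (by omega) hbq (by omega) (by omega)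
    have hphi : (q - mp).choose (b - mp - 1) + mp ≤ (q-1).choose (b-2) + 1 :=
      phi_chain hmp (by omega) (by omega) hbq
    have hqp1 : q + 1 ≤ (q - r + 1).choose (b - r) + r := qp1 (by omega) hrb hbq
    omega

lemma A6 {q b mp e : ℕ} (hmp : 1 ≤ mp) (hmpb : mp ≤ b - 2) (hbq : b ≤ q)
    (he1 : q ≤ e) (he2 : e ≤ q + b - 2) (side : b ≤ e.choose q + mp) :
    e.choose q + (q+1).choose b + (q - mp).choose (b - mp - 1) + mp ≤
      e.choose b + q.choose (b-1) + q + 1 := by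
  have hb : 2 ≤ b := by omega
  have pas : (q+1).choose b = q.choose (b-1) + q.choose b := pascal_q1b (by omega)
  rcases Nat.eq_or_lt_of_le he1 with h | h
  · subst h
    rw [Nat.choose_self] at side
    omega
  · have h56 : e.choose q + q.choose b + (q-1).choose (b-2) ≤ e.choose b + q :=
      A56 hb hbq (by omega) (by omega)
    have hphi : (q - mp).choose (b - mp - 1) + mp ≤ (q-1).choose (b-2) + 1 :=
      phi_chain hmp (by omega) hb hbq
    omega


/-- downward closed among `q`-sets in colex -/
def DC (q : ℕ) (𝒟 : Finset (Finset ℕ)) : Prop :=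
  ∀ s ∈ 𝒟, ∀ t : Finset ℕ, t.card = q → toColex t ≤ toColex s → t ∈ 𝒟

lemma pascal_pred {n j : ℕ} (hn : 1 ≤ n) (hj : 1 ≤ j) :
    n.choose j = (n-1).choose (j-1) + (n-1).choose j := by
  obtain ⟨n', rfl⟩ : ∃ n', n = n' + 1 := ⟨n-1, by omega⟩
  obtain ⟨j', rfl⟩ : ∃ j', j = j' + 1 := ⟨j-1, by omega⟩
  simp [Nat.choose_succ_succ']

lemma card_le_choose {N q : ℕ} {𝒟 : Finset (Finset ℕ)}
    (hmem : ∀ s ∈ 𝒟, s ⊆ range N ∧ s.card = q) : 𝒟.card ≤ N.choose q := by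
  have h : 𝒟 ⊆ (range N).powersetCard q := by
    intro s hs
    exact mem_powersetCard.2 ⟨(hmem s hs).1, (hmem s hs).2⟩
  simpa [card_powersetCard] using card_le_card h

lemma ins_mono {e : ℕ} {t s : Finset ℕ} (het : e ∉ t) (hes : e ∉ s)
    (h : toColex t ≤ toColex s) : toColex (insert e t) ≤ toColex (insert e s) := by
  have h1 : insert e t \ {e} = t := by
    rw [sdiff_singleton_eq_erase, erase_insert het]
  have h2 : insert e s \ {e} = s := by
    rw [sdiff_singleton_eq_erase, erase_insert hes]
  have := toColex_sdiff_le_toColex_sdiff (u := {e}) (s := insert e t) (t := insert e s)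
    (by simp) (by simp)
  rw [h1, h2] at this
  exact this.1 h

theorem key : ∀ N q b k (𝒟 : Finset (Finset ℕ)), q = b + k →
    (∀ s ∈ 𝒟, s ⊆ range N ∧ s.card = q) → DC q 𝒟 →
    ((N ≤ q + b - 1 ∧ 1 ≤ b →
      (∀ r, 1 ≤ r → r + 1 ≤ b → r ≤ 𝒟.card →
          𝒟.card + (q+1).choose b ≤ (∂^[k] 𝒟).card + (q - r + 1).choose (b - r) + r)
      ∧ (b ≤ 𝒟.card → 𝒟.card + (q+1).choose b ≤ (∂^[k] 𝒟).card + q + 1)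
      ∧ (𝒟.card ≤ (∂^[k] 𝒟).card))
    ∧ (q + b ≤ N → 𝒟.card + N.choose b ≤ (∂^[k] 𝒟).card + N.choose q)) := by
  intro N
  induction N using Nat.strong_induction_on with
  | _ N IH =>
    intro q b k 𝒟 hqbk hmem hDC
    have hbq : b ≤ q := by omega
    by_cases hne : 𝒟.Nonempty
    swap
    · rw [not_nonempty_iff_eq_empty] at hne
      subst hne
      have hsh : ∂^[k] (∅ : Finset (Finset ℕ)) = ∅ := Function.iterate_fixed shadow_empty k
      rw [hsh]
      simp only [card_empty]
      constructor
      · rintro ⟨-, hb⟩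
        exact ⟨fun r hr1 hrb hr => by omega, fun hb0 => by omega, le_rfl⟩
      · intro hN
        have := half_mono hbq (by omega : b + q ≤ N)
        omega
    by_cases hb0 : b = 0
    · subst hb0
      obtain ⟨s₀, hs₀⟩ := hne
      have hSge : 1 ≤ (∂^[k] 𝒟).card := by
        have : (∅ : Finset ℕ) ∈ ∂^[k] 𝒟 := by
          rw [mem_shadow_iterate_iff_exists_sdiff]
          refine ⟨s₀, hs₀, empty_subset _, ?_⟩
          rw [sdiff_empty, (hmem s₀ hs₀).2]; omega
        exact card_pos.2 ⟨∅, this⟩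
      have hqN : q ≤ N := by
        have h1 := card_le_card (hmem s₀ hs₀).1
        rw [(hmem s₀ hs₀).2, card_range] at h1
        exact h1
      have hm := card_le_choose hmem
      constructor
      · rintro ⟨hsl, hb⟩; omega
      · intro hN
        rw [Nat.choose_zero_right]
        omega
    have hb1 : 1 ≤ b := by omega
    by_cases htop : ∃ s ∈ 𝒟, N - 1 ∈ s
    swap
    · push_neg at htop
      have hmem' : ∀ s ∈ 𝒟, s ⊆ range (N-1) ∧ s.card = q := by
        intro s hs
        refine ⟨fun x hx => ?_, (hmem s hs).2⟩
        have hx1 := mem_range.1 ((hmem s hs).1 hx)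
        have hx2 := htop s hs
        rw [mem_range]
        rcases Nat.lt_or_ge x (N-1) with h | h
        · exact h
        · exfalso; have : x = N - 1 := by omega
          exact hx2 (this ▸ hx)
      obtain ⟨s₀, hs₀⟩ := hne
      have hqN1 : q ≤ N - 1 := by
        have h1 := card_le_card (hmem' s₀ hs₀).1
        rw [(hmem s₀ hs₀).2, card_range] at h1
        exact h1
      have child := IH (N-1) (by omega) q b k 𝒟 hqbk hmem' hDC
      constructor
      · rintro ⟨hslack, -⟩
        exact child.1 ⟨by omega, hb1⟩
      · intro hN
        rcases Nat.lt_or_ge (N-1) (q+b) with hlt | hge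
        · have hpos := (child.1 ⟨by omega, hb1⟩).2.2
          have hsym : N.choose b = N.choose q := by
            have hNe : N = q + b := by omega
            rw [hNe, ← Nat.choose_symm (by omega : b ≤ q + b)]
            congr 1; omega
          omega
        · have hneg := child.2 hge
          have p1 : N.choose q = (N-1).choose (q-1) + (N-1).choose q :=
            pascal_pred (by omega) (by omega)
          have p2 : N.choose b = (N-1).choose (b-1) + (N-1).choose b :=
            pascal_pred (by omega) (by omega)
          have hmono : (N-1).choose (b-1) ≤ (N-1).choose (q-1) :=
            half_mono (by omega) (by omega)
          omega
    obtain ⟨sbar, hsbar, hesbar⟩ := htop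
    have hqle : q ≤ N := by
      have h1 := card_le_card (hmem sbar hsbar).1
      rw [(hmem sbar hsbar).2, card_range] at h1
      exact h1
    rcases Nat.eq_or_lt_of_le hqle with hNq | hNq
    · -- N = q : 𝒟 = {range q}
      have h𝒟 : 𝒟 = {range q} := by
        apply Finset.eq_singleton_iff_nonempty_unique_mem.2
        refine ⟨hne, fun s hs => ?_⟩
        exact eq_of_subset_of_card_le ((hmem s hs).1.trans (by rw [← hNq]))
          (by rw [card_range, (hmem s hs).2, hNq])
      have hm : 𝒟.card = 1 := by rw [h𝒟]; simp
      have hsh : ∂^[k] 𝒟 = powersetCard b (range q) := by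
        ext u
        rw [mem_shadow_iterate_iff_exists_sdiff, mem_powersetCard, h𝒟]
        constructor
        · rintro ⟨s, hs, hus, hcard⟩
          simp only [mem_singleton] at hs
          subst hs
          refine ⟨hus, ?_⟩
          have h1 := card_sdiff_of_subset hus
          have h2 := card_le_card hus
          rw [card_range] at h1 h2
          omega
        · rintro ⟨hu, hcard⟩
          refine ⟨range q, by simp, hu, ?_⟩
          rw [card_sdiff_of_subset hu, card_range, hcard]
          omega
      have hS : (∂^[k] 𝒟).card = q.choose b := by
        rw [hsh, card_powersetCard, card_range]
      constructor
      · rintro ⟨hslack, -⟩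
        refine ⟨?_, ?_, ?_⟩
        · intro r hr1 hrb hrm
          have hr : r = 1 := by omega
          subst hr
          have hq1 : (q - 1 + 1) = q := by omega
          rw [hm, hS, hq1]
          have := pascal_q1b (q := q) (b := b) (by omega)
          omega
        · intro hbm
          have hb : b = 1 := by omega
          subst hb
          rw [hm, hS]
          simp only [Nat.choose_one_right]
          omega
        · rw [hm, hS]
          exact Nat.choose_pos hbq
      · intro hN; omega
    -- N ≥ q + 1
    set e := N - 1 with he_def
    have hesbar' : e ∈ sbar := hesbar
    have heq : q ≤ e := by omega
    have hfull : ∀ t : Finset ℕ, t ⊆ range e → t.card = q → t ∈ 𝒟 := by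
      intro t ht hcard
      refine hDC sbar hsbar t hcard ?_
      rw [toColex_le_toColex]
      intro x hxt hxs
      refine ⟨e, hesbar', fun h => ?_, le_of_lt (mem_range.1 (ht hxt))⟩
      exact absurd (mem_range.1 (ht h)) (lt_irrefl e)
    set 𝒟₁ := 𝒟.filter (fun s => e ∈ s) with h𝒟₁
    set 𝒟' := 𝒟₁.image (fun s => s.erase e) with h𝒟'
    have hmem𝒟₁ : ∀ s ∈ 𝒟₁, e ∈ s := fun s hs => (mem_filter.1 hs).2
    have hsplit : 𝒟 = powersetCard q (range e) ∪ 𝒟₁ := by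
      ext s
      simp only [mem_union, mem_powersetCard, h𝒟₁, mem_filter]
      constructor
      · intro hs
        by_cases hes : e ∈ s
        · exact Or.inr ⟨hs, hes⟩
        · refine Or.inl ⟨fun x hx => ?_, (hmem s hs).2⟩
          have := mem_range.1 ((hmem s hs).1 hx)
          rw [mem_range]
          rcases Nat.lt_or_ge x e with h | h
          · exact h
          · exfalso; have hxe : x = e := by omega
            exact hes (hxe ▸ hx)
      · rintro (⟨h1, h2⟩ | ⟨h1, -⟩)
        · exact hfull s h1 h2
        · exact h1
    have hdisj : Disjoint (powersetCard q (range e)) 𝒟₁ := by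
      rw [disjoint_left]
      intro s hs hs1
      have := (mem_powersetCard.1 hs).1 (hmem𝒟₁ s hs1)
      simp at this
    have hinj𝒟₁ : Set.InjOn (fun s : Finset ℕ => s.erase e) (𝒟₁ : Set (Finset ℕ)) := by
      intro s hs t ht h
      simp only at h
      rw [← insert_erase (hmem𝒟₁ s (mem_coe.1 hs)), h,
        insert_erase (hmem𝒟₁ t (mem_coe.1 ht))]
    have hm : 𝒟.card = e.choose q + 𝒟'.card := by
      rw [hsplit, card_union_of_disjoint hdisj, card_powersetCard, card_range, h𝒟',
        Finset.card_image_of_injOn hinj𝒟₁]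
    have hmem' : ∀ s' ∈ 𝒟', s' ⊆ range e ∧ s'.card = q - 1 := by
      intro s' hs'
      obtain ⟨s, hs, rfl⟩ := mem_image.1 hs'
      constructor
      · intro x hx
        have hxs := mem_of_mem_erase hx
        have hxe := ne_of_mem_erase hx
        have := mem_range.1 ((hmem s (mem_filter.1 hs).1).1 hxs)
        rw [mem_range]; omega
      · rw [card_erase_of_mem (hmem𝒟₁ s hs), (hmem s (mem_filter.1 hs).1).2]
    have hDC' : DC (q-1) 𝒟' := by
      intro s' hs' t' hcardt' hle
      obtain ⟨s, hs, rfl⟩ := mem_image.1 hs'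
      have hes' : e ∉ s.erase e := notMem_erase _ _
      have het' : e ∉ t' := by
        intro h
        have := forall_lt_mono hle (fun x hx => mem_range.1 ((hmem' _ hs').1 hx)) e h
        omega
      have hins : toColex (insert e t') ≤ toColex (insert e (s.erase e)) :=
        ins_mono het' hes' hle
      rw [insert_erase (hmem𝒟₁ s hs)] at hins
      have hmemins : insert e t' ∈ 𝒟 := by
        refine hDC s (mem_filter.1 hs).1 _ ?_ hins
        rw [card_insert_of_notMem het', hcardt']
        omega
      have hmem1 : insert e t' ∈ 𝒟₁ := mem_filter.2 ⟨hmemins, mem_insert_self _ _⟩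
      refine mem_image.2 ⟨insert e t', hmem1, ?_⟩
      exact erase_insert het'
    have hne' : 𝒟'.Nonempty :=
      ⟨sbar.erase e, mem_image.2 ⟨sbar, mem_filter.2 ⟨hsbar, hesbar'⟩, rfl⟩⟩
    have hq1bk : q - 1 = (b-1) + k := by omega
    have hshsub : ∀ u' ∈ ∂^[k] 𝒟', u' ⊆ range e := by
      intro u' hu'
      rw [mem_shadow_iterate_iff_exists_sdiff] at hu'
      obtain ⟨s', hs', hsub, -⟩ := hu'
      exact hsub.trans (hmem' s' hs').1
    have hshadow : ∂^[k] 𝒟 = powersetCard b (range e) ∪ (∂^[k] 𝒟').image (insert e) := by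
      ext u
      rw [mem_shadow_iterate_iff_exists_sdiff, mem_union, mem_powersetCard, mem_image]
      constructor
      · rintro ⟨s, hs, hus, hcard⟩
        have hcards : s.card = q := (hmem s hs).2
        have hucard : u.card = b := by
          have h1 := card_sdiff_of_subset hus
          have h2 := card_le_card hus
          omega
        by_cases heu : e ∈ u
        · right
          have hes : e ∈ s := hus heu
          refine ⟨u.erase e, ?_, insert_erase heu⟩
          rw [mem_shadow_iterate_iff_exists_sdiff]
          refine ⟨s.erase e, mem_image.2 ⟨s, mem_filter.2 ⟨hs, hes⟩, rfl⟩,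
            erase_subset_erase e hus, ?_⟩
          have hsd : s.erase e \ u.erase e = s \ u := by
            ext x
            simp only [mem_sdiff, mem_erase]
            constructor
            · rintro ⟨⟨hxe, hxs⟩, h⟩
              exact ⟨hxs, fun hxu => h ⟨hxe, hxu⟩⟩
            · rintro ⟨hxs, hxu⟩
              exact ⟨⟨fun h => hxu (h ▸ heu), hxs⟩, fun h => hxu h.2⟩
          rw [hsd, hcard]
        · left
          refine ⟨fun x hx => ?_, hucard⟩
          have hx1 := mem_range.1 ((hmem s hs).1 (hus hx))
          have hx2 : x ≠ e := fun h => heu (h ▸ hx)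
          rw [mem_range]; omega
      · rintro (⟨hsub, hcard⟩ | ⟨u', hu', rfl⟩)
        · obtain ⟨s, hus, hsrange, hscard⟩ :=
            exists_subsuperset_card_eq hsub (by omega : u.card ≤ q)
              (by rw [card_range]; omega)
          refine ⟨s, hfull s hsrange hscard, hus, ?_⟩
          rw [card_sdiff_of_subset hus, hscard, hcard]
          omega
        · rw [mem_shadow_iterate_iff_exists_sdiff] at hu'
          obtain ⟨s', hs', hsub, hcard⟩ := hu'
          obtain ⟨s, hs, rfl⟩ := mem_image.1 hs'
          have heu' : e ∉ u' := fun h => (notMem_erase e s) (hsub h)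
          refine ⟨s, (mem_filter.1 hs).1, ?_, ?_⟩
          · rw [← insert_erase (hmem𝒟₁ s hs)]
            exact insert_subset_insert _ hsub
          · have hsd : s \ insert e u' = s.erase e \ u' := by
              ext x
              simp only [mem_sdiff, mem_erase, mem_insert]
              tauto
            rw [hsd, hcard]
    have hdisj2 : Disjoint (powersetCard b (range e)) ((∂^[k] 𝒟').image (insert e)) := by
      rw [disjoint_left]
      rintro u hu hu2
      obtain ⟨u', hu', rfl⟩ := mem_image.1 hu2
      have := mem_range.1 ((mem_powersetCard.1 hu).1 (mem_insert_self e u'))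
      omega
    have hinj2 : Set.InjOn (insert e) (↑(∂^[k] 𝒟') : Set (Finset ℕ)) := by
      intro u hu v hv h
      have heu : e ∉ u := fun hh =>
        absurd (mem_range.1 (hshsub u (mem_coe.1 hu) hh)) (lt_irrefl e)
      have hev : e ∉ v := fun hh =>
        absurd (mem_range.1 (hshsub v (mem_coe.1 hv) hh)) (lt_irrefl e)
      rw [← erase_insert heu, h, erase_insert hev]
    have hS : (∂^[k] 𝒟).card = e.choose b + (∂^[k] 𝒟').card := by
      rw [hshadow, card_union_of_disjoint hdisj2, card_powersetCard, card_range,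
        Finset.card_image_of_injOn hinj2]
    have child := IH e (by omega) (q-1) (b-1) k 𝒟' hq1bk hmem' hDC'
    have hm'1 : 1 ≤ 𝒟'.card := card_pos.2 hne'
    have pNq : N.choose q = e.choose (q-1) + e.choose q :=
      pascal_pred (by omega) (by omega)
    have pNb : N.choose b = e.choose (b-1) + e.choose b :=
      pascal_pred (by omega) (by omega)
    constructor
    · rintro ⟨hslack, -⟩
      have hb2 : 2 ≤ b := by omega
      have hPOS : 𝒟.card ≤ (∂^[k] 𝒟).card := by
        rcases Nat.lt_or_ge e ((q-1)+(b-1)) with hch | hch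
        · have hpos' := (child.1 ⟨by omega, by omega⟩).2.2
          have hflip := choose_flip hbq (by omega : e ≤ q + b)
          omega
        · have hneg := child.2 hch
          have hflip : N.choose q ≤ N.choose b := choose_flip hbq (by omega : N ≤ q + b)
          omega
      refine ⟨?_, ?_, hPOS⟩
      · intro r hr1 hrb hrm
        rw [hm] at hrm
        rcases Nat.lt_or_ge e ((q-1)+(b-1)) with hch | hch
        · have childS := child.1 ⟨by omega, by omega⟩
          rcases Nat.lt_or_ge 𝒟'.card r with hm'r | hm'r
          · have hc := childS.1 𝒟'.card hm'1 (by omega) le_rfl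
            have h1 : (q - 1 - 𝒟'.card + 1) = q - 𝒟'.card := by omega
            have h2 : (q - 1 + 1) = q := by omega
            have h3 : (b - 1 - 𝒟'.card) = b - 𝒟'.card - 1 := by omega
            rw [h1, h2, h3] at hc
            have hA5 := A5 (q:=q) (b:=b) (r:=r) (mp:=𝒟'.card) (e:=e) hm'1 hm'r hrb hbq heq
              (by omega) (by omega)
            omega
          · rcases Nat.lt_or_ge (r+1) b with hrb2 | hrb2
            · have hc := childS.1 r hr1 (by omega) (by omega)
              have h1 : (q - 1 - r + 1) = q - r := by omega
              have h2 : (q - 1 + 1) = q := by omega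
              have h3 : (b - 1 - r) = b - r - 1 := by omega
              rw [h1, h2, h3] at hc
              have hA3 := A3 hr1 hrb hbq heq (by omega)
              have hpas1 := pascal_q1b (q:=q) (b:=b) (by omega)
              have hpas2 : (q - r + 1).choose (b - r)
                  = (q-r).choose (b-r-1) + (q-r).choose (b-r) :=
                pascal_q1b (q:=q-r) (b:=b-r) (by omega)
              omega
            · have hre : r = b - 1 := by omega
              have hc := childS.2.1 (by omega)
              have h2 : (q - 1 + 1) = q := by omega
              rw [h2] at hc
              have hA4 := A4 hb1 hbq heq (by omega)
              have hbr : b - r = 1 := by omega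
              have hone : (q - r + 1).choose (b - r) = q - r + 1 := by
                rw [hbr, Nat.choose_one_right]
              have hpas1 := pascal_q1b (q:=q) (b:=b) (by omega)
              omega
        · have hneg := child.2 hch
          have hA2 := A2' hb2 hbq (by omega : q+1 ≤ N) (by omega)
          have hqp := qp1 hr1 hrb hbq
          omega
      · intro hbm
        rw [hm] at hbm
        rcases Nat.lt_or_ge e ((q-1)+(b-1)) with hch | hch
        · have childS := child.1 ⟨by omega, by omega⟩
          rcases Nat.lt_or_ge 𝒟'.card (b-1) with hm'b | hm'b
          · have hc := childS.1 𝒟'.card hm'1 (by omega) le_rfl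
            have h1 : (q - 1 - 𝒟'.card + 1) = q - 𝒟'.card := by omega
            have h2 : (q - 1 + 1) = q := by omega
            have h3 : (b - 1 - 𝒟'.card) = b - 𝒟'.card - 1 := by omega
            rw [h1, h2, h3] at hc
            have hA6 := A6 (q:=q) (b:=b) (mp:=𝒟'.card) (e:=e) hm'1 (by omega) hbq heq
              (by omega) (by omega)
            omega
          · have hc := childS.2.1 hm'b
            have h2 : (q - 1 + 1) = q := by omega
            rw [h2] at hc
            have hA4 := A4 hb1 hbq heq (by omega)
            have hpas1 := pascal_q1b (q:=q) (b:=b) (by omega)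
            omega
        · have hneg := child.2 hch
          have hA2 := A2' hb2 hbq (by omega : q+1 ≤ N) (by omega)
          omega
    · intro hN
      have hch : (q-1) + (b-1) ≤ e := by omega
      have hneg := child.2 hch
      omega


/-- pick a lower set of any size in a linearly ordered finset -/
lemma exists_lower_subset {γ : Type*} [LinearOrder γ] (X : Finset γ) :
    ∀ m, m ≤ X.card → ∃ Y ⊆ X, Y.card = m ∧ ∀ y ∈ Y, ∀ x ∈ X, x ≤ y → x ∈ Y := by
  classical
  intro m
  induction m with
  | zero => intro _; exact ⟨∅, empty_subset _, card_empty, by simp⟩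
  | succ m ih =>
    intro hm
    obtain ⟨Y, hYX, hcard, hlow⟩ := ih (by omega)
    have hne : (X \ Y).Nonempty := by
      rw [← card_pos, card_sdiff_of_subset hYX]
      omega
    set c := (X \ Y).min' hne with hc
    have hcX : c ∈ X \ Y := min'_mem _ _
    refine ⟨insert c Y, insert_subset (mem_sdiff.1 hcX).1 hYX, ?_, ?_⟩
    · rw [card_insert_of_notMem (mem_sdiff.1 hcX).2, hcard]
    · intro y hy x hx hxy
      rcases mem_insert.1 hy with h | hyY
      · by_cases hxe : x ∈ Y
        · exact mem_insert_of_mem hxe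
        · have h1 : c ≤ x := min'_le _ _ (mem_sdiff.2 ⟨hx, hxe⟩)
          have h2 : x = c := le_antisymm (hxy.trans (le_of_eq h)) h1
          exact h2 ▸ mem_insert_self _ _
      · exact mem_insert_of_mem (hlow y hyY x hx hxy)

lemma exists_initSeg (n q m : ℕ) (hm : m ≤ n.choose q) :
    ∃ 𝒞 : Finset (Finset (Fin n)), IsInitSeg 𝒞 q ∧ 𝒞.card = m := by
  classical
  set X : Finset (Colex (Finset (Fin n))) := (powersetCard q (univ : Finset (Fin n))).image toColex
    with hX
  have hXcard : X.card = n.choose q := by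
    rw [hX, Finset.card_image_of_injective _ toColex.injective, card_powersetCard, Finset.card_fin]
  obtain ⟨Y, hYX, hYcard, hlow⟩ := exists_lower_subset X m (by omega)
  refine ⟨Y.image ofColex, ⟨?_, ?_⟩, ?_⟩
  · intro s hs
    simp only [coe_image, Set.mem_image, mem_coe] at hs
    obtain ⟨y, hy, rfl⟩ := hs
    obtain ⟨t, ht, rfl⟩ := mem_image.1 (hYX hy)
    exact (mem_powersetCard.1 ht).2
  · rintro s t hs ⟨hlt, hcard⟩
    obtain ⟨y, hy, rfl⟩ := mem_image.1 hs
    have h1 : toColex t ∈ X := by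
      rw [hX, mem_image]
      exact ⟨t, mem_powersetCard.2 ⟨subset_univ _, hcard⟩, rfl⟩
    have h2 : toColex t ∈ Y := by
      refine hlow y hy _ h1 ?_
      simpa using hlt.le
    exact mem_image.2 ⟨toColex t, h2, rfl⟩
  · rw [Finset.card_image_of_injective _ ofColex.injective, hYcard]

/-- transfer a `Fin n` family to `ℕ` -/
def toNat (F : Finset (Finset (Fin n))) : Finset (Finset ℕ) :=
  F.image (fun s => s.image Fin.val)

lemma card_toNat (F : Finset (Finset (Fin n))) : (toNat F).card = F.card :=
  Finset.card_image_of_injective _ (image_injective Fin.val_injective)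

lemma shadow_toNat (F : Finset (Finset (Fin n))) : ∂ (toNat F) = toNat (∂ F) := by
  classical
  ext u
  simp only [toNat, mem_shadow_iff, mem_image]
  constructor
  · rintro ⟨s, ⟨s₀, hs₀, rfl⟩, a, ha, rfl⟩
    obtain ⟨a₀, ha₀, rfl⟩ := mem_image.1 ha
    refine ⟨s₀.erase a₀, ⟨s₀, hs₀, a₀, ha₀, rfl⟩, ?_⟩
    rw [image_erase Fin.val_injective]
  · rintro ⟨u₀, ⟨s₀, hs₀, a₀, ha₀, rfl⟩, rfl⟩
    refine ⟨s₀.image Fin.val, ⟨s₀, hs₀, rfl⟩, a₀.val, mem_image_of_mem _ ha₀, ?_⟩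
    rw [image_erase Fin.val_injective]

lemma iter_shadow_toNat (F : Finset (Finset (Fin n))) (k : ℕ) :
    ∂^[k] (toNat F) = toNat (∂^[k] F) := by
  induction k with
  | zero => rfl
  | succ k ih => rw [Function.iterate_succ_apply', Function.iterate_succ_apply', ih, shadow_toNat]

lemma toNat_mem {n q : ℕ} {𝒞 : Finset (Finset (Fin n))} (h : IsInitSeg 𝒞 q) :
    ∀ s ∈ toNat 𝒞, s ⊆ range n ∧ s.card = q := by
  rintro s hs
  obtain ⟨s₀, hs₀, rfl⟩ := mem_image.1 hs
  constructor
  · intro x hx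
    obtain ⟨a, ha, rfl⟩ := mem_image.1 hx
    simp only [mem_range]
    exact a.isLt
  · rw [Finset.card_image_of_injective _ Fin.val_injective]
    exact h.1 hs₀

lemma toNat_DC {n q : ℕ} {𝒞 : Finset (Finset (Fin n))} (h : IsInitSeg 𝒞 q) :
    DC q (toNat 𝒞) := by
  intro s hs t hcard hle
  obtain ⟨s₀, hs₀, rfl⟩ := mem_image.1 hs
  have htlt : ∀ x ∈ t, x < n := by
    refine forall_lt_mono hle ?_
    intro x hx
    obtain ⟨a, ha, rfl⟩ := mem_image.1 hx
    exact a.isLt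
  set t₀ : Finset (Fin n) := t.attachFin htlt with ht₀
  have himg : t₀.image Fin.val = t := by
    ext x
    simp only [mem_image]
    constructor
    · rintro ⟨a, ha, rfl⟩
      exact (mem_attachFin htlt).1 ha
    · intro hx
      exact ⟨⟨x, htlt x hx⟩, (mem_attachFin htlt).2 hx, rfl⟩
  have hle0 : toColex t₀ ≤ toColex s₀ := by
    rw [← toColex_image_le_toColex_image Fin.val_strictMono, himg]
    exact hle
  rcases eq_or_lt_of_le hle0 with heq | hlt
  · have : t₀ = s₀ := toColex.injective heq
    rw [← himg, this]
    exact mem_image_of_mem _ hs₀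
  · have hcard0 : t₀.card = q := by
      rw [← himg, Finset.card_image_of_injective _ Fin.val_injective] at hcard
      exact hcard
    have ht₀mem : t₀ ∈ 𝒞 := h.2 hs₀ ⟨hlt, hcard0⟩
    rw [← himg]
    exact mem_image_of_mem _ ht₀mem



end Stmt16

open Stmt16

theorem stmt_16 (n a b r : ℕ) (hn0 : 0 < n) (ha0 : 0 < a) (hb0 : 0 < b) (hr0 : 0 < r)
    (hn : a + b ≤ n) (hab : a < b) (𝓐 𝓑 : Finset (Finset ℕ))
    (h𝓐 : ∀ A ∈ 𝓐, A ⊆ Finset.Icc 1 n ∧ A.card = a)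
    (h𝓑 : ∀ B ∈ 𝓑, B ⊆ Finset.Icc 1 n ∧ B.card = b)
    (cross : ∀ A ∈ 𝓐, ∀ B ∈ 𝓑, (A ∩ B).Nonempty)
    (hr : r ≤ 𝓐.card) :
    (r ≤ b - 1 →
      𝓐.card + 𝓑.card ≤
        n.choose b - (n - a + 1).choose b + (n - a - r + 1).choose (b - r) + r) ∧
    (b ≤ r → r ≤ n - a + 1 →
      𝓐.card + 𝓑.card ≤ n.choose b - (n - a + 1).choose b + n - a + 1) := by
  classical
  set g : ℕ → Fin n := fun x => if h : x - 1 < n then ⟨x - 1, h⟩ else ⟨0, hn0⟩ with hg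
  have hgval : ∀ x ∈ Icc 1 n, (g x).val = x - 1 := by
    intro x hx
    rw [mem_Icc] at hx
    simp only [hg]
    rw [dif_pos (by omega : x - 1 < n)]
  have hginj : ∀ x ∈ Icc 1 n, ∀ y ∈ Icc 1 n, g x = g y → x = y := by
    intro x hx y hy h
    have h1 := hgval x hx
    have h2 := hgval y hy
    rw [mem_Icc] at hx hy
    have h3 : (g x).val = (g y).val := by rw [h]
    omega
  set 𝓐' : Finset (Finset (Fin n)) := 𝓐.image (fun A => A.image g) with h𝓐'
  set 𝓑' : Finset (Finset (Fin n)) := 𝓑.image (fun B => B.image g) with h𝓑'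
  have himg_inj : ∀ {𝓕 : Finset (Finset ℕ)} {c : ℕ}, (∀ A ∈ 𝓕, A ⊆ Icc 1 n ∧ A.card = c) →
      Set.InjOn (fun A : Finset ℕ => A.image g) (𝓕 : Set (Finset ℕ)) := by
    intro 𝓕 c h𝓕 A hA B hB hAB
    simp only at hAB
    ext x
    constructor
    · intro hx
      have hgx : g x ∈ B.image g := by rw [← hAB]; exact mem_image_of_mem _ hx
      obtain ⟨y, hy, hxy⟩ := mem_image.1 hgx
      have := hginj y ((h𝓕 B (mem_coe.1 hB)).1 hy) x ((h𝓕 A (mem_coe.1 hA)).1 hx) hxy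
      rwa [← this]
    · intro hx
      have hgx : g x ∈ A.image g := by rw [hAB]; exact mem_image_of_mem _ hx
      obtain ⟨y, hy, hxy⟩ := mem_image.1 hgx
      have := hginj y ((h𝓕 A (mem_coe.1 hA)).1 hy) x ((h𝓕 B (mem_coe.1 hB)).1 hx) hxy
      rwa [← this]
  have hA'card : 𝓐'.card = 𝓐.card := Finset.card_image_of_injOn (himg_inj h𝓐)
  have hB'card : 𝓑'.card = 𝓑.card := Finset.card_image_of_injOn (himg_inj h𝓑)
  have hsized : ∀ {𝓕 : Finset (Finset ℕ)} {c : ℕ}, (∀ A ∈ 𝓕, A ⊆ Icc 1 n ∧ A.card = c) →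
      ∀ A ∈ 𝓕, (A.image g).card = c := by
    intro 𝓕 c h𝓕 A hA
    rw [Finset.card_image_of_injOn (fun x hx y hy h =>
      hginj x ((h𝓕 A hA).1 hx) y ((h𝓕 A hA).1 hy) h)]
    exact (h𝓕 A hA).2
  have hA'sized : ∀ A' ∈ 𝓐', A'.card = a := by
    intro A' hA'
    obtain ⟨A, hA, rfl⟩ := mem_image.1 hA'
    exact hsized h𝓐 A hA
  have hB'sized : ∀ B' ∈ 𝓑', B'.card = b := by
    intro B' hB'
    obtain ⟨B, hB, rfl⟩ := mem_image.1 hB'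
    exact hsized h𝓑 B hB
  have cross' : ∀ A' ∈ 𝓐', ∀ B' ∈ 𝓑', (A' ∩ B').Nonempty := by
    intro A' hA' B' hB'
    obtain ⟨A, hA, rfl⟩ := mem_image.1 hA'
    obtain ⟨B, hB, rfl⟩ := mem_image.1 hB'
    obtain ⟨x, hx⟩ := cross A hA B hB
    rw [mem_inter] at hx
    exact ⟨g x, mem_inter.2 ⟨mem_image_of_mem _ hx.1, mem_image_of_mem _ hx.2⟩⟩
  set 𝒜c : Finset (Finset (Fin n)) := 𝓐'ᶜˢ with h𝒜c
  have h𝒜c_card : 𝒜c.card = 𝓐.card := by rw [h𝒜c, card_compls, hA'card]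
  have h𝒜c_sized : ∀ C ∈ 𝒜c, C.card = n - a := by
    intro C hC
    have h1 : Cᶜ ∈ 𝓐' := mem_compls.1 hC
    have h2 := hA'sized _ h1
    have h4 : Cᶜ.card = n - C.card := by rw [card_compl, Fintype.card_fin]
    have h5 : C.card ≤ n := by
      have := card_le_card (subset_univ C)
      rwa [Finset.card_fin] at this
    omega
  have hmle : 𝓐.card ≤ n.choose (n - a) := by
    have hsub : 𝒜c ⊆ powersetCard (n-a) univ := fun C hC =>
      mem_powersetCard.2 ⟨subset_univ _, h𝒜c_sized C hC⟩
    have hle := card_le_card hsub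
    rw [card_powersetCard, Finset.card_fin] at hle
    omega
  obtain ⟨𝒞, h𝒞init, h𝒞card⟩ := exists_initSeg n (n-a) 𝓐.card hmle
  have h𝒜c_sized' : (𝒜c : Set (Finset (Fin n))).Sized (n-a) :=
    fun C hC => h𝒜c_sized C (mem_coe.1 hC)
  have hKK : (∂^[n-a-b] 𝒞).card ≤ (∂^[n-a-b] 𝒜c).card :=
    Finset.iterated_kk h𝒜c_sized' (by rw [h𝒞card, h𝒜c_card]) h𝒞init
  have hshadow_sized : ∀ u ∈ ∂^[n-a-b] 𝒜c, u.card = b := by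
    intro u hu
    rw [mem_shadow_iterate_iff_exists_sdiff] at hu
    obtain ⟨C, hC, huC, hcard⟩ := hu
    have h1 := card_sdiff_of_subset huC
    have h2 := card_le_card huC
    have := h𝒜c_sized C hC
    omega
  have hdisj : Disjoint 𝓑' (∂^[n-a-b] 𝒜c) := by
    rw [disjoint_left]
    intro u hu hu2
    rw [mem_shadow_iterate_iff_exists_sdiff] at hu2
    obtain ⟨C, hC, huC, -⟩ := hu2
    have h1 : Cᶜ ∈ 𝓐' := mem_compls.1 hC
    obtain ⟨x, hx⟩ := cross' _ h1 u hu
    rw [mem_inter, mem_compl] at hx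
    exact hx.1 (huC hx.2)
  have hcount : 𝓑'.card + (∂^[n-a-b] 𝒜c).card ≤ n.choose b := by
    have hsub : 𝓑' ∪ ∂^[n-a-b] 𝒜c ⊆ powersetCard b univ := by
      intro u hu
      rcases mem_union.1 hu with h | h
      · exact mem_powersetCard.2 ⟨subset_univ _, hB'sized u h⟩
      · exact mem_powersetCard.2 ⟨subset_univ _, hshadow_sized u h⟩
    have hle := card_le_card hsub
    rw [card_union_of_disjoint hdisj, card_powersetCard, Finset.card_fin] at hle
    exact hle
  have hkey := key n (n-a) b (n-a-b) (toNat 𝒞) (by omega) (toNat_mem h𝒞init) (toNat_DC h𝒞init)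
  have hkey1 := hkey.1 ⟨by omega, by omega⟩
  have htn_card : (toNat 𝒞).card = 𝓐.card := by rw [card_toNat, h𝒞card]
  have htn_shadow : (∂^[n-a-b] (toNat 𝒞)).card = (∂^[n-a-b] 𝒞).card := by
    rw [iter_shadow_toNat, card_toNat]
  have hch_le : (n - a + 1).choose b ≤ n.choose b := Nat.choose_le_choose b (by omega)
  constructor
  · intro hrb
    have hc1 := hkey1.1 r hr0 (by omega) (by rw [htn_card]; exact hr)
    rw [htn_card, htn_shadow] at hc1
    rw [← hB'card]
    omega
  · intro hbr _
    have hc2 := hkey1.2.1 (by rw [htn_card]; omega)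
    rw [htn_card, htn_shadow] at hc2
    rw [← hB'card]
    omega
end

section
/- Suppose A, B ⊂ binom([n], k) are cross t-intersecting families (|A ∩ B| ≥ t for all A ∈ A, B ∈ B) with |A| ≤ |B|. Then either |B| ≤ C(n, k − t) or |A| ≤ C(n, k − t − 1). -/
open Finset UV
open scoped FinsetFamily

namespace Frankl19


/-- monotonicity of binomial coefficients: `C(n,i) ≤ C(n,j)` when `i ≤ j` and `i + j ≤ n`. -/
lemma choose_le_choose_right {n i j : ℕ} (h1 : i ≤ j) (h2 : i + j ≤ n) :
    n.choose i ≤ n.choose j := by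
  -- first a helper: stepping up while strictly below half
  have step : ∀ i j : ℕ, i ≤ j → 2 * j ≤ n → n.choose i ≤ n.choose j := by
    intro i j hij hj
    induction j with
    | zero => simpa [Nat.le_zero.1 hij]
    | succ m ihm =>
      rcases Nat.lt_or_ge i (m+1) with h | h
      · have hm : n.choose i ≤ n.choose m := ihm (by omega) (by omega)
        refine hm.trans (Nat.choose_le_succ_of_lt_half_left ?_)
        omega
      · have : i = m + 1 := by omega
        simp [this]
  rcases le_or_gt (2 * j) n with hj | hj
  · exact step i j h1 hj
  · -- use symmetry : C(n,j) = C(n, n - j), and n - j ≥ i with 2*(n-j) ≤ n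
    have hjn : j ≤ n := by omega
    have hsymm : n.choose (n - j) = n.choose j := Nat.choose_symm hjn
    calc n.choose i ≤ n.choose (n - j) := step i (n - j) (by omega) (by omega)
    _ = n.choose j := hsymm

/-- a uniform family of `r`-subsets of `[1,n]` has at most `C(n,r)` members. -/
lemma card_le_choose {n r : ℕ} {𝓕 : Finset (Finset ℕ)}
    (h : ∀ S ∈ 𝓕, S ⊆ Icc 1 n ∧ S.card = r) : 𝓕.card ≤ n.choose r := by
  have hsub : 𝓕 ⊆ powersetCard r (Icc 1 n) := by
    intro S hS
    rw [mem_powersetCard]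
    exact ⟨(h S hS).1, (h S hS).2⟩
  have := card_le_card hsub
  rwa [card_powersetCard, Nat.card_Icc, Nat.add_sub_cancel] at this

/-- if all members of a family contain a fixed set `W`, removing `W` is injective. -/
lemma card_le_choose_sub {n r : ℕ} {W : Finset ℕ} {𝓕 : Finset (Finset ℕ)}
    (h : ∀ S ∈ 𝓕, S ⊆ Icc 1 n ∧ S.card = r ∧ W ⊆ S) : 𝓕.card ≤ n.choose (r - W.card) := by
  have key : 𝓕.card ≤ (powersetCard (r - W.card) (Icc 1 n)).card := by
    refine card_le_card_of_injOn (fun S => S \ W) ?_ ?_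
    · intro S hS
      obtain ⟨h1, h2, h3⟩ := h S hS
      rw [mem_coe, mem_powersetCard]
      refine ⟨(sdiff_subset).trans h1, ?_⟩
      rw [card_sdiff_of_subset h3, h2]
    · intro S1 h1 S2 h2 heq
      obtain ⟨_, _, hw1⟩ := h S1 (by simpa using h1)
      obtain ⟨_, _, hw2⟩ := h S2 (by simpa using h2)
      have : S1 \ W ∪ W = S2 \ W ∪ W := by simp only at heq; rw [heq]
      rwa [sdiff_union_of_subset hw1, sdiff_union_of_subset hw2] at this
  rwa [card_powersetCard, Nat.card_Icc, Nat.add_sub_cancel] at key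

/-- left-shifted family: closed under replacing an element `j` by a smaller `i ≥ 1`. -/
def shifted (𝓕 : Finset (Finset ℕ)) : Prop :=
  ∀ A ∈ 𝓕, ∀ j ∈ A, ∀ i : ℕ, 1 ≤ i → i < j → i ∉ A → insert i (A.erase j) ∈ 𝓕

/-- a shifted family containing a set of size `a` contains `[1,a]`. -/
lemma shifted_icc_mem {n : ℕ} {𝓕 : Finset (Finset ℕ)} (hs : shifted 𝓕)
    (hsub : ∀ S ∈ 𝓕, S ⊆ Icc 1 n) {A : Finset ℕ} (hA : A ∈ 𝓕) :
    Icc 1 A.card ∈ 𝓕 := by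
  set N := ∑ x ∈ A, x with hN
  clear_value N
  induction N using Nat.strong_induction_on generalizing A with
  | _ N ih =>
  by_cases heq : A = Icc 1 A.card
  · rwa [← heq]
  · -- find i ∈ Icc 1 A.card \ A and j ∈ A \ Icc 1 A.card
    have hcard : (Icc 1 A.card).card = A.card := by rw [Nat.card_Icc, Nat.add_sub_cancel]
    have hex_i : ∃ i ∈ Icc 1 A.card, i ∉ A := by
      by_contra hcon
      push_neg at hcon
      have hsub2 : Icc 1 A.card ⊆ A := hcon
      exact heq (eq_of_subset_of_card_le hsub2 (le_of_eq hcard.symm)).symm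
    obtain ⟨i, hi, hiA⟩ := hex_i
    have hex_j : ∃ j ∈ A, j ∉ Icc 1 A.card := by
      by_contra hcon
      push_neg at hcon
      exact heq (eq_of_subset_of_card_le hcon (le_of_eq hcard))
    obtain ⟨j, hj, hjI⟩ := hex_j
    rw [mem_Icc] at hi hjI
    push_neg at hjI
    have hij : i < j := by
      rcases Nat.lt_or_ge i j with h | h
      · exact h
      · exfalso; have := hjI (by linarith [(mem_Icc.1 (hsub A hA hj)).1]); omega
    have hA' : insert i (A.erase j) ∈ 𝓕 := hs A hA j hj i hi.1 hij hiA
    have hcard' : (insert i (A.erase j)).card = A.card := by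
      rw [card_insert_of_notMem (fun hmem => hiA (mem_of_mem_erase hmem)),
        card_erase_of_mem hj]
      have : 1 ≤ A.card := card_pos.2 ⟨j, hj⟩
      omega
    have hsum : (∑ x ∈ insert i (A.erase j), x) + j = i + N := by
      rw [sum_insert (fun hmem => hiA (mem_of_mem_erase hmem))]
      have := sum_erase_add A id hj
      simp only [id] at this
      omega
    have hlt : (∑ x ∈ insert i (A.erase j), x) < N := by omega
    have := ih _ hlt hA' rfl
    rwa [hcard'] at this

/-- a shifted family containing a set `A` avoiding `i₀ ≤ |A|+1` contains `Icc 1 (|A|+1) \ {i₀}`. -/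
lemma shifted_icc_erase_mem {n : ℕ} {𝓕 : Finset (Finset ℕ)} (hs : shifted 𝓕)
    (hsub : ∀ S ∈ 𝓕, S ⊆ Icc 1 n) {A : Finset ℕ} (hA : A ∈ 𝓕) {i₀ : ℕ}
    (hi₀ : i₀ ∈ Icc 1 (A.card + 1)) (hi₀A : i₀ ∉ A) :
    (Icc 1 (A.card + 1)).erase i₀ ∈ 𝓕 := by
  set N := ∑ x ∈ A, x with hN
  clear_value N
  induction N using Nat.strong_induction_on generalizing A with
  | _ N ih =>
  set T := (Icc 1 (A.card + 1)).erase i₀ with hT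
  have hcard : T.card = A.card := by
    rw [hT, card_erase_of_mem hi₀, Nat.card_Icc]; omega
  by_cases heq : A = T
  · rwa [← heq]
  · have hex_i : ∃ i ∈ T, i ∉ A := by
      by_contra hcon
      push_neg at hcon
      exact heq (eq_of_subset_of_card_le hcon (le_of_eq hcard.symm)).symm
    obtain ⟨i, hi, hiA⟩ := hex_i
    have hex_j : ∃ j ∈ A, j ∉ T := by
      by_contra hcon
      push_neg at hcon
      exact heq (eq_of_subset_of_card_le hcon (le_of_eq hcard))
    obtain ⟨j, hj, hjT⟩ := hex_j
    have hjbig : A.card + 1 < j := by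
      rw [hT, mem_erase] at hjT
      push_neg at hjT
      rcases eq_or_ne j i₀ with h | h
      · exact absurd (h ▸ hj) hi₀A
      · have h1 : 1 ≤ j := (mem_Icc.1 (hsub A hA hj)).1
        have := hjT h
        rw [mem_Icc] at this
        omega
    have hi2 : 1 ≤ i ∧ i ≤ A.card + 1 := by
      rw [hT, mem_erase, mem_Icc] at hi; exact hi.2
    have hij : i < j := by omega
    have hA' : insert i (A.erase j) ∈ 𝓕 := hs A hA j hj i hi2.1 hij hiA
    have hcardA' : (insert i (A.erase j)).card = A.card := by
      rw [card_insert_of_notMem (fun hmem => hiA (mem_of_mem_erase hmem)),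
        card_erase_of_mem hj]
      have : 1 ≤ A.card := card_pos.2 ⟨j, hj⟩
      omega
    have hsum : (∑ x ∈ insert i (A.erase j), x) + j = i + N := by
      rw [sum_insert (fun hmem => hiA (mem_of_mem_erase hmem))]
      have := sum_erase_add A id hj
      simp only [id] at this
      omega
    have hlt : (∑ x ∈ insert i (A.erase j), x) < N := by omega
    have hi₀A' : i₀ ∉ insert i (A.erase j) := by
      rw [mem_insert]
      rintro (h | h)
      · rw [hT, mem_erase] at hi; exact hi.1 h.symm
      · exact hi₀A (mem_of_mem_erase h)
    have := ih _ hlt hA' (by rw [hcardA']; exact hi₀ ) hi₀A' rfl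
    rwa [hcardA'] at this



variable {i j t n : ℕ} {𝓐 𝓑 𝓕 : Finset (Finset ℕ)}

lemma compress_moved {A : Finset ℕ} (h1 : i ∉ A) (h2 : j ∈ A) (hij : i ≠ j) :
    UV.compress {i} {j} A = insert i (A.erase j) := by
  rw [UV.compress, if_pos ⟨by simpa using h1, by simpa using h2⟩]
  ext x
  simp only [sup_eq_union, mem_sdiff, mem_union, mem_singleton, mem_insert, mem_erase]
  have hxi : x = i → x ≠ j := fun h => h ▸ hij
  tauto

lemma compress_not_moved {A : Finset ℕ} (h : ¬(i ∉ A ∧ j ∈ A)) :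
    UV.compress {i} {j} A = A := by
  rw [UV.compress, if_neg]
  rintro ⟨h1, h2⟩
  exact h ⟨by simpa using h1, by simpa using h2⟩

/-- membership structure in a compressed family. -/
lemma mem_comp_cases (hij : i ≠ j) {S : Finset ℕ} (hS : S ∈ 𝓒 {i} {j} 𝓕) :
    (S ∈ 𝓕 ∧ UV.compress {i} {j} S ∈ 𝓕) ∨
    (S ∉ 𝓕 ∧ ∃ A ∈ 𝓕, i ∉ A ∧ j ∈ A ∧ S = insert i (A.erase j)) := by
  rw [UV.mem_compression] at hS
  rcases hS with h | ⟨hnot, A, hA, hcomp⟩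
  · exact Or.inl h
  · refine Or.inr ⟨hnot, A, hA, ?_⟩
    by_cases hm : i ∉ A ∧ j ∈ A
    · exact ⟨hm.1, hm.2, by rw [← hcomp, compress_moved hm.1 hm.2 hij]⟩
    · rw [compress_not_moved hm] at hcomp
      exact absurd (hcomp ▸ hA) hnot

/-- the moved set intersected with a set avoiding `i`. -/
lemma inter_move_eq {A B : Finset ℕ} (hiB : i ∉ B) :
    (insert i (A.erase j)) ∩ B = (A ∩ B).erase j := by
  ext x
  simp only [mem_inter, mem_insert, mem_erase]
  have hxi : x = i → x ∉ B := fun h => h ▸ hiB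
  tauto

lemma card_inter_ge_of_move {A B : Finset ℕ} (hiA : i ∉ A) (hjA : j ∈ A)
    (hB : ¬(j ∈ B ∧ i ∉ B)) : (A ∩ B).card ≤ ((insert i (A.erase j)) ∩ B).card := by
  push_neg at hB
  by_cases hjB : j ∈ B
  · have hiB : i ∈ B := hB hjB
    rw [insert_inter_of_mem hiB, erase_inter, card_insert_of_notMem
      (fun hmem => hiA (mem_of_mem_inter_left (mem_of_mem_erase hmem))),
      card_erase_of_mem (mem_inter.2 ⟨hjA, hjB⟩)]
    have : 1 ≤ (A ∩ B).card := card_pos.2 ⟨j, mem_inter.2 ⟨hjA, hjB⟩⟩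
    omega
  · have hAB : A ∩ B = (A.erase j) ∩ B := by
      rw [erase_inter, erase_eq_of_notMem (fun h => hjB (mem_of_mem_inter_right h))]
    rw [hAB]
    by_cases hiB : i ∈ B
    · rw [insert_inter_of_mem hiB]
      exact card_le_card (subset_insert _ _)
    · rw [insert_inter_of_notMem hiB]

/-- both moved: intersection cardinality preserved. -/
lemma card_inter_both_moved {A B : Finset ℕ} (hiA : i ∉ A) (hjA : j ∈ A)
    (hiB : i ∉ B) (hjB : j ∈ B) :
    ((insert i (A.erase j)) ∩ (insert i (B.erase j))).card = (A ∩ B).card := by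
  have hset : (insert i (A.erase j)) ∩ (insert i (B.erase j)) = insert i ((A ∩ B).erase j) := by
    ext x
    simp only [mem_inter, mem_insert, mem_erase]
    tauto
  rw [hset, card_insert_of_notMem
    (fun hmem => hiA (mem_of_mem_inter_left (mem_of_mem_erase hmem))),
    card_erase_of_mem (mem_inter.2 ⟨hjA, hjB⟩)]
  have : 1 ≤ (A ∩ B).card := card_pos.2 ⟨j, mem_inter.2 ⟨hjA, hjB⟩⟩
  omega

/-- cross `t`-intersection is preserved by simultaneous compression. -/
lemma cross_compression (hij : i < j)
    (hcross : ∀ A ∈ 𝓐, ∀ B ∈ 𝓑, t ≤ (A ∩ B).card) :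
    ∀ A ∈ 𝓒 {i} {j} 𝓐, ∀ B ∈ 𝓒 {i} {j} 𝓑, t ≤ (A ∩ B).card := by
  have hne : i ≠ j := Nat.ne_of_lt hij
  intro S hS R hR
  rcases mem_comp_cases hne hS with ⟨hS1, hS2⟩ | ⟨hSnot, A, hA, hiA, hjA, hSA⟩
  · rcases mem_comp_cases hne hR with ⟨hR1, _⟩ | ⟨hRnot, B, hB, hiB, hjB, hRB⟩
    · exact hcross S hS1 R hR1
    · -- S fixed, R moved
      subst hRB
      by_cases hbad : j ∈ S ∧ i ∉ S
      · have hS2' : insert i (S.erase j) ∈ 𝓐 := by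
          rwa [compress_moved hbad.2 hbad.1 hne] at hS2
        have hkey := hcross _ hS2' B hB
        have e1 : (insert i (S.erase j)) ∩ B = (S ∩ B).erase j := inter_move_eq hiB
        have e2 : S ∩ (insert i (B.erase j)) = (B ∩ S).erase j := by
          rw [inter_comm]; exact inter_move_eq hbad.2
        rw [e1] at hkey
        rw [e2, inter_comm B S]
        exact hkey
      · calc t ≤ (B ∩ S).card := by rw [inter_comm]; exact hcross S hS1 B hB
          _ ≤ ((insert i (B.erase j)) ∩ S).card := card_inter_ge_of_move hiB hjB hbad
          _ = (S ∩ (insert i (B.erase j))).card := by rw [inter_comm]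
  · rcases mem_comp_cases hne hR with ⟨hR1, hR2⟩ | ⟨hRnot, B, hB, hiB, hjB, hRB⟩
    · subst hSA
      by_cases hbad : j ∈ R ∧ i ∉ R
      · have hR2' : insert i (R.erase j) ∈ 𝓑 := by
          rwa [compress_moved hbad.2 hbad.1 hne] at hR2
        have hkey := hcross A hA _ hR2'
        have e1 : A ∩ (insert i (R.erase j)) = (R ∩ A).erase j := by
          rw [inter_comm]; exact inter_move_eq hiA
        have e2 : (insert i (A.erase j)) ∩ R = (A ∩ R).erase j := inter_move_eq hbad.2
        rw [e1] at hkey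
        rw [e2, inter_comm A R]
        exact hkey
      · calc t ≤ (A ∩ R).card := hcross A hA R hR1
          _ ≤ ((insert i (A.erase j)) ∩ R).card := card_inter_ge_of_move hiA hjA hbad
    · subst hSA; subst hRB
      rw [card_inter_both_moved hiA hjA hiB hjB]
      exact hcross A hA B hB

/-- compression preserves the uniformity/ground-set conditions. -/
lemma cond_compression (h1 : 1 ≤ i) (hij : i < j) {a : ℕ}
    (h : ∀ S ∈ 𝓕, S ⊆ Icc 1 n ∧ S.card = a) :
    ∀ S ∈ 𝓒 {i} {j} 𝓕, S ⊆ Icc 1 n ∧ S.card = a := by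
  intro S hS
  rcases mem_comp_cases (Nat.ne_of_lt hij) hS with ⟨hS1, _⟩ | ⟨_, A, hA, hiA, hjA, hSA⟩
  · exact h S hS1
  · obtain ⟨hsub, hcard⟩ := h A hA
    subst hSA
    constructor
    · intro x hx
      rw [mem_insert] at hx
      rcases hx with rfl | hx
      · have hj' := mem_Icc.1 (hsub hjA)
        rw [mem_Icc]; omega
      · exact hsub (mem_of_mem_erase hx)
    · rw [card_insert_of_notMem (fun hmem => hiA (mem_of_mem_erase hmem)),
        card_erase_of_mem hjA]
      have : 1 ≤ A.card := card_pos.2 ⟨j, hjA⟩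
      omega

/-- the measure of a family: sum of the sums of its members. -/
def fmeasure (𝓕 : Finset (Finset ℕ)) : ℕ := ∑ S ∈ 𝓕, ∑ x ∈ S, x

lemma compression_eq_union :
    𝓒 {i} {j} 𝓕 = {A ∈ 𝓕 | UV.compress {i} {j} A ∈ 𝓕} ∪
      {A ∈ 𝓕 | UV.compress {i} {j} A ∉ 𝓕}.image (UV.compress {i} {j}) := by
  rw [UV.compression]
  congr 1
  ext S
  simp only [mem_filter, mem_image]
  constructor
  · rintro ⟨⟨A, hA, rfl⟩, hnot⟩
    exact ⟨A, ⟨hA, hnot⟩, rfl⟩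
  · rintro ⟨A, ⟨hA, hnot⟩, rfl⟩
    exact ⟨⟨A, hA, rfl⟩, hnot⟩

lemma fmeasure_compression_le (h1 : 1 ≤ i) (hij : i < j) :
    fmeasure (𝓒 {i} {j} 𝓕) ≤ fmeasure 𝓕 ∧
      (𝓒 {i} {j} 𝓕 ≠ 𝓕 → fmeasure (𝓒 {i} {j} 𝓕) < fmeasure 𝓕) := by
  classical
  set c := UV.compress ({i} : Finset ℕ) {j} with hc
  set F1 := {A ∈ 𝓕 | c A ∈ 𝓕} with hF1
  set F2 := {A ∈ 𝓕 | c A ∉ 𝓕} with hF2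
  have hdisj : Disjoint F1 (F2.image c) := by
    rw [disjoint_left]
    intro S hS1 hS2
    obtain ⟨A, hA, rfl⟩ := mem_image.1 hS2
    exact (mem_filter.1 hA).2 (mem_filter.1 hS1).1
  have hre : 𝓒 {i} {j} 𝓕 = F1 ∪ F2.image c := compression_eq_union
  have hinj : Set.InjOn c ↑F2 := UV.compress_injOn
  have hmeq : fmeasure (𝓒 {i} {j} 𝓕) = ∑ A ∈ F1, (∑ x ∈ A, x) + ∑ A ∈ F2, (∑ x ∈ c A, x) := by
    rw [fmeasure, hre, sum_union hdisj, sum_image hinj]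
  have hsplit : fmeasure 𝓕 = ∑ A ∈ F1, (∑ x ∈ A, x) + ∑ A ∈ F2, (∑ x ∈ A, x) :=
    (sum_filter_add_sum_filter_not 𝓕 (fun A => c A ∈ 𝓕) _).symm
  have hptw : ∀ A ∈ F2, (∑ x ∈ c A, x) < ∑ x ∈ A, x := by
    intro A hA
    rw [hF2, mem_filter] at hA
    have hmove : i ∉ A ∧ j ∈ A := by
      by_contra hcon
      rw [hc] at hA
      rw [show UV.compress ({i} : Finset ℕ) {j} A = A from compress_not_moved hcon] at hA
      exact hA.2 hA.1
    have hcA : c A = insert i (A.erase j) := compress_moved hmove.1 hmove.2 (Nat.ne_of_lt hij)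
    rw [hcA, sum_insert (fun hmem => hmove.1 (mem_of_mem_erase hmem))]
    have := sum_erase_add A id hmove.2
    simp only [id] at this
    omega
  constructor
  · rw [hmeq, hsplit]
    exact Nat.add_le_add_left (sum_le_sum (fun A hA => le_of_lt (hptw A hA))) _
  · intro hne
    have hF2ne : F2.Nonempty := by
      by_contra hcon
      rw [not_nonempty_iff_eq_empty] at hcon
      apply hne
      rw [hre, hcon, image_empty, union_empty, hF1, filter_eq_self]
      intro A hA
      by_contra hcnot
      exact eq_empty_iff_forall_notMem.1 hcon A (by rw [hF2, mem_filter]; exact ⟨hA, hcnot⟩)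
    rw [hmeq, hsplit]
    exact Nat.add_lt_add_left (sum_lt_sum_of_nonempty hF2ne hptw) _

lemma exists_shifted
 (n a b t : ℕ) :
    ∀ (N : ℕ) (𝓐 𝓑 : Finset (Finset ℕ)),
    fmeasure 𝓐 + fmeasure 𝓑 ≤ N →
    (∀ A ∈ 𝓐, A ⊆ Icc 1 n ∧ A.card = a) →
    (∀ B ∈ 𝓑, B ⊆ Icc 1 n ∧ B.card = b) →
    (∀ A ∈ 𝓐, ∀ B ∈ 𝓑, t ≤ (A ∩ B).card) →
    ∃ 𝓐' 𝓑' : Finset (Finset ℕ),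
      (∀ A ∈ 𝓐', A ⊆ Icc 1 n ∧ A.card = a) ∧ (∀ B ∈ 𝓑', B ⊆ Icc 1 n ∧ B.card = b) ∧
      (∀ A ∈ 𝓐', ∀ B ∈ 𝓑', t ≤ (A ∩ B).card) ∧ 𝓐'.card = 𝓐.card ∧ 𝓑'.card = 𝓑.card ∧
      shifted 𝓐' ∧ shifted 𝓑' := by
  intro N
  induction N using Nat.strong_induction_on with
  | _ N ih =>
  intro 𝓐 𝓑 hm h𝓐 h𝓑 hcross
  have step : ∀ i j : ℕ, 1 ≤ i → i < j →
      (𝓒 {i} {j} 𝓐 ≠ 𝓐 ∨ 𝓒 {i} {j} 𝓑 ≠ 𝓑) →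
      ∃ 𝓐' 𝓑' : Finset (Finset ℕ),
        (∀ A ∈ 𝓐', A ⊆ Icc 1 n ∧ A.card = a) ∧ (∀ B ∈ 𝓑', B ⊆ Icc 1 n ∧ B.card = b) ∧
        (∀ A ∈ 𝓐', ∀ B ∈ 𝓑', t ≤ (A ∩ B).card) ∧ 𝓐'.card = 𝓐.card ∧ 𝓑'.card = 𝓑.card ∧
        shifted 𝓐' ∧ shifted 𝓑' := by
    intro i j h1 hij hne
    have hmA := fmeasure_compression_le (𝓕 := 𝓐) h1 hij
    have hmB := fmeasure_compression_le (𝓕 := 𝓑) h1 hij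
    have hlt : fmeasure (𝓒 {i} {j} 𝓐) + fmeasure (𝓒 {i} {j} 𝓑) < N := by
      rcases hne with hne | hne
      · have := hmA.2 hne
        have := hmB.1
        omega
      · have := hmB.2 hne
        have := hmA.1
        omega
    obtain ⟨𝓐', 𝓑', c1, c2, c3, c4, c5, c6, c7⟩ :=
      ih _ hlt (𝓒 {i} {j} 𝓐) (𝓒 {i} {j} 𝓑) (le_refl _)
        (cond_compression h1 hij h𝓐) (cond_compression h1 hij h𝓑)
        (cross_compression hij hcross)
    exact ⟨𝓐', 𝓑', c1, c2, c3, by rw [c4, UV.card_compression],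
      by rw [c5, UV.card_compression], c6, c7⟩
  by_cases hA : shifted 𝓐
  · by_cases hB : shifted 𝓑
    · exact ⟨𝓐, 𝓑, h𝓐, h𝓑, hcross, rfl, rfl, hA, hB⟩
    · rw [shifted] at hB
      push_neg at hB
      obtain ⟨B, hBmem, j, hj, i, h1, hij, hiB, hnot⟩ := hB
      refine step i j h1 hij (Or.inr ?_)
      intro heq
      apply hnot
      have := UV.compress_mem_compression (u := ({i} : Finset ℕ)) (v := ({j} : Finset ℕ)) hBmem
      rwa [compress_moved hiB hj (Nat.ne_of_lt hij), heq] at this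
  · rw [shifted] at hA
    push_neg at hA
    obtain ⟨A, hAmem, j, hj, i, h1, hij, hiA, hnot⟩ := hA
    refine step i j h1 hij (Or.inl ?_)
    intro heq
    apply hnot
    have := UV.compress_mem_compression (u := ({i} : Finset ℕ)) (v := ({j} : Finset ℕ)) hAmem
    rwa [compress_moved hiA hj (Nat.ne_of_lt hij), heq] at this



/-- code for the missing element in the `|M| = 1` case -/
def gval (t : ℕ) (M : Finset ℕ) : ℕ :=
  if M.sum id = 1 then t + 2 else M.sum id - 1

/-- The injection map used in the `a = t+1` case. -/
def phi (t : ℕ) (B : Finset ℕ) : Finset ℕ :=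
  if Icc 1 (t+2) ⊆ B then B \ Icc 1 t
  else if ((Icc 1 (t+2)) \ B).card = 1 then
    insert (gval t ((Icc 1 (t+2)) \ B)) (B \ Icc 1 (t+2))
  else B \ Icc 1 (t+2)

lemma special_card_bound {n t b i₀ : ℕ} {𝓑 : Finset (Finset ℕ)} (ht : 1 ≤ t)
    (hn : t + 2 ≤ n) (hi₀ : i₀ ∈ Icc 1 (t+1))
    (h𝓑 : ∀ B ∈ 𝓑, B ⊆ Icc 1 n ∧ B.card = b)
    (hIB : ∀ B ∈ 𝓑, t ≤ ((Icc 1 (t+1)) ∩ B).card)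
    (hI'B : ∀ B ∈ 𝓑, t ≤ (((Icc 1 (t+2)).erase i₀) ∩ B).card) :
    𝓑.card ≤ n.choose (b - t) := by
  classical
  set K := Icc 1 (t+2) with hK
  set I := Icc 1 (t+1) with hI
  have hIK : I ⊆ K := by rw [hI, hK]; exact Icc_subset_Icc_right (by omega)
  have hKcard : K.card = t + 2 := by rw [hK, Nat.card_Icc]; omega
  have hIcard : I.card = t + 1 := by rw [hI, Nat.card_Icc]; omega
  have hKn : K ⊆ Icc 1 n := by rw [hK]; exact Icc_subset_Icc_right (by omega)
  have recon : ∀ B : Finset ℕ, (B ∩ K) ∪ (B \ K) = B := by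
    intro B; ext x; simp only [mem_union, mem_inter, mem_sdiff]; tauto
  -- basic facts about each B ∈ 𝓑
  have hTlb : ∀ B ∈ 𝓑, t ≤ (B ∩ K).card := by
    intro B hB
    calc t ≤ (I ∩ B).card := hIB B hB
      _ ≤ (K ∩ B).card := card_le_card (inter_subset_inter_right hIK)
      _ = (B ∩ K).card := by rw [inter_comm]
  have hsplit : ∀ B ∈ 𝓑, (B ∩ K).card + (B \ K).card = b := by
    intro B hB
    rw [card_inter_add_card_sdiff, (h𝓑 B hB).2]
  have hMT : ∀ B ∈ 𝓑, (K \ B).card + (B ∩ K).card = t + 2 := by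
    intro B hB
    have := card_sdiff_add_card_inter K B
    rw [inter_comm K B] at this
    omega
  -- the element coded by gval, and decoding
  have hgval : ∀ B ∈ 𝓑, (K \ B).card = 1 → ∃ y, K \ B = {y} ∧ y ∈ K ∧
      gval t (K \ B) = (if y = 1 then t + 2 else y - 1) := by
    intro B hB hc
    obtain ⟨y, hy⟩ := card_eq_one.1 hc
    refine ⟨y, hy, ?_, ?_⟩
    · have : y ∈ K \ B := hy ▸ mem_singleton_self y
      exact (mem_sdiff.1 this).1
    · rw [gval, hy, sum_singleton]
      simp only [id]
  -- trace identification in the |M| = 2 case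
  have htrace : ∀ B ∈ 𝓑, ¬ K ⊆ B → (K \ B).card ≠ 1 → B ∩ K = I.erase i₀ := by
    intro B hB hc1 hc2
    have hM1 : 1 ≤ (K \ B).card := by
      rw [Nat.one_le_iff_ne_zero, Ne, card_eq_zero, sdiff_eq_empty_iff_subset]
      exact hc1
    have hM2 : (K \ B).card = 2 := by
      have := hMT B hB; have := hTlb B hB; omega
    have hT : (B ∩ K).card = t := by have := hMT B hB; omega
    have hsub1 : I ∩ B ⊆ B ∩ K := fun x hx => by
      rw [mem_inter] at hx ⊢; exact ⟨hx.2, hIK hx.1⟩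
    have heq1 : I ∩ B = B ∩ K := eq_of_subset_of_card_le hsub1 (by rw [hT]; exact hIB B hB)
    have hsub2 : (K.erase i₀) ∩ B ⊆ B ∩ K := fun x hx => by
      rw [mem_inter] at hx ⊢; exact ⟨hx.2, mem_of_mem_erase hx.1⟩
    have heq2 : (K.erase i₀) ∩ B = B ∩ K :=
      eq_of_subset_of_card_le hsub2 (by rw [hT]; exact hI'B B hB)
    have hTI : B ∩ K ⊆ I.erase i₀ := by
      intro x hx
      rw [mem_erase]
      constructor
      · have : x ∈ (K.erase i₀) ∩ B := heq2 ▸ hx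
        exact (mem_erase.1 (mem_inter.1 this).1).1
      · have : x ∈ I ∩ B := heq1 ▸ hx
        exact (mem_inter.1 this).1
    have hi₀I : i₀ ∈ I := hi₀
    refine eq_of_subset_of_card_le hTI ?_
    rw [card_erase_of_mem hi₀I, hIcard, hT]
    omega
  -- phi maps into the right powerset
  have hmaps : ∀ B ∈ 𝓑, phi t B ∈ powersetCard (b - t) (Icc 1 n) := by
    intro B hB
    obtain ⟨hBsub, hBcard⟩ := h𝓑 B hB
    rw [mem_powersetCard, phi]
    split_ifs with hc1 hc2
    · constructor
      · exact sdiff_subset.trans hBsub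
      · have hsubt : Icc 1 t ⊆ B := (Icc_subset_Icc_right (by omega)).trans hc1
        rw [card_sdiff_of_subset hsubt, hBcard, Nat.card_Icc]
        omega
    · obtain ⟨y, hy, hyK, hgv⟩ := hgval B hB hc2
      have hg : gval t (K \ B) ∈ K := by
        rw [hgv]
        rw [hK, mem_Icc] at hyK ⊢
        split_ifs with h1 <;> omega
      have hc2' : (K \ B).card = 1 := hc2
      have hT1 : (B ∩ K).card = t + 1 := by have := hMT B hB; omega
      constructor
      · intro x hx
        rcases mem_insert.1 hx with rfl | hx
        · exact hKn hg
        · exact hBsub (mem_sdiff.1 hx).1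
      · rw [card_insert_of_notMem (fun hmem => (mem_sdiff.1 hmem).2 hg)]
        have hBKe : B \ Icc 1 (t+2) = B \ K := rfl
        have := hsplit B hB
        rw [hBKe]
        omega
    · constructor
      · exact sdiff_subset.trans hBsub
      · have hT : (B ∩ K).card = t := by
          have := htrace B hB hc1 hc2
          rw [this, card_erase_of_mem hi₀, hIcard]
          omega
        have hBKe : B \ Icc 1 (t+2) = B \ K := rfl
        have := hsplit B hB
        rw [hBKe]
        omega
  -- the trace of the image determines the case
  have himg : ∀ B ∈ 𝓑,
      (K ⊆ B → (phi t B ∩ K).card = 2) ∧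
      (¬ K ⊆ B → (K \ B).card = 1 → (phi t B ∩ K).card = 1) ∧
      (¬ K ⊆ B → (K \ B).card ≠ 1 → (phi t B ∩ K).card = 0) := by
    intro B hB
    refine ⟨?_, ?_, ?_⟩
    · intro hc1
      rw [phi, if_pos (hK ▸ hc1)]
      have : (B \ Icc 1 t) ∩ K = K \ Icc 1 t := by
        ext x
        simp only [mem_inter, mem_sdiff]
        constructor
        · rintro ⟨⟨h1, h2⟩, h3⟩; exact ⟨h3, h2⟩
        · rintro ⟨h1, h2⟩; exact ⟨⟨hc1 h1, h2⟩, h1⟩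
      rw [this, card_sdiff_of_subset (by rw [hK]; exact Icc_subset_Icc_right (by omega)), hKcard,
        Nat.card_Icc]
      omega
    · intro hc1 hc2
      rw [phi, if_neg (by rw [← hK]; exact hc1), if_pos (by rw [← hK]; exact hc2)]
      obtain ⟨y, hy, hyK, hgv⟩ := hgval B hB hc2
      have hg : gval t (K \ B) ∈ K := by
        rw [hgv]
        rw [hK, mem_Icc] at hyK ⊢
        split_ifs with h1 <;> omega
      have : (insert (gval t (K \ B)) (B \ K)) ∩ K = {gval t (K \ B)} := by
        ext x
        simp only [mem_inter, mem_insert, mem_sdiff, mem_singleton]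
        constructor
        · rintro ⟨rfl | ⟨h1, h2⟩, h3⟩
          · rfl
          · exact absurd h3 h2
        · rintro rfl; exact ⟨Or.inl rfl, hg⟩
      rw [this, card_singleton]
    · intro hc1 hc2
      rw [phi, if_neg (by rw [← hK]; exact hc1), if_neg (by rw [← hK]; exact hc2)]
      rw [card_eq_zero]
      ext x
      simp only [mem_inter, mem_sdiff, notMem_empty]
      tauto
  -- injectivity
  have hinj : Set.InjOn (phi t) ↑𝓑 := by
    intro B1 hB1' B2 hB2' heq
    have hB1 : B1 ∈ 𝓑 := hB1'
    have hB2 : B2 ∈ 𝓑 := hB2'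
    obtain ⟨e1a, e1b, e1c⟩ := himg B1 hB1
    obtain ⟨e2a, e2b, e2c⟩ := himg B2 hB2
    by_cases c11 : K ⊆ B1 <;> by_cases c21 : K ⊆ B2
    · -- both contain K
      rw [phi, if_pos (hK ▸ c11)] at heq
      rw [phi, if_pos (hK ▸ c21)] at heq
      have h1 : B1 \ Icc 1 t ∪ Icc 1 t = B2 \ Icc 1 t ∪ Icc 1 t := by rw [heq]
      rwa [sdiff_union_of_subset ((Icc_subset_Icc_right (by omega)).trans (hK ▸ c11)),
        sdiff_union_of_subset ((Icc_subset_Icc_right (by omega)).trans (hK ▸ c21))] at h1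
    · exfalso
      by_cases c22 : (K \ B2).card = 1
      · have h1 := e1a c11; have h2 := e2b c21 c22; rw [heq] at h1; omega
      · have h1 := e1a c11; have h2 := e2c c21 c22; rw [heq] at h1; omega
    · exfalso
      by_cases c12 : (K \ B1).card = 1
      · have h1 := e1b c11 c12; have h2 := e2a c21; rw [heq] at h1; omega
      · have h1 := e1c c11 c12; have h2 := e2a c21; rw [heq] at h1; omega
    · by_cases c12 : (K \ B1).card = 1 <;> by_cases c22 : (K \ B2).card = 1
      · -- both |M| = 1
        obtain ⟨y1, hy1, hy1K, hgv1⟩ := hgval B1 hB1 c12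
        obtain ⟨y2, hy2, hy2K, hgv2⟩ := hgval B2 hB2 c22
        rw [phi, if_neg (by rw [← hK]; exact c11), if_pos (by rw [← hK]; exact c12)] at heq
        rw [phi, if_neg (by rw [← hK]; exact c21), if_pos (by rw [← hK]; exact c22)] at heq
        have hg1 : gval t (K \ B1) ∈ K := by
          rw [hgv1]; rw [hK, mem_Icc] at hy1K ⊢; split_ifs with h1 <;> omega
        have hg2 : gval t (K \ B2) ∈ K := by
          rw [hgv2]; rw [hK, mem_Icc] at hy2K ⊢; split_ifs with h1 <;> omega
        -- gval equality
        have hgg : gval t (K \ B1) = gval t (K \ B2) := by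
          have m1 : gval t (K \ B1) ∈ insert (gval t (K \ B2)) (B2 \ K) := by
            rw [← heq]; exact mem_insert_self _ _
          rcases mem_insert.1 m1 with h | h
          · exact h
          · exact absurd hg1 (fun hc => (mem_sdiff.1 h).2 hc)
        -- y equality
        have hyy : y1 = y2 := by
          rw [hK, mem_Icc] at hy1K hy2K
          rw [hgv1, hgv2] at hgg
          split_ifs at hgg <;> omega
        -- recover B
        have hBK : B1 ∩ K = B2 ∩ K := by
          have h1 : K \ (K \ B1) = B1 ∩ K := by
            rw [sdiff_sdiff_right_self, inf_eq_inter, inter_comm]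
          have h2 : K \ (K \ B2) = B2 ∩ K := by
            rw [sdiff_sdiff_right_self, inf_eq_inter, inter_comm]
          rw [← h1, ← h2, hy1, hy2, hyy]
        have hBd : B1 \ K = B2 \ K := by
          have h1 : (insert (gval t (K \ B1)) (B1 \ K)).erase (gval t (K \ B1)) = B1 \ K :=
            erase_insert (fun hmem => (mem_sdiff.1 hmem).2 hg1)
          have h2 : (insert (gval t (K \ B2)) (B2 \ K)).erase (gval t (K \ B2)) = B2 \ K :=
            erase_insert (fun hmem => (mem_sdiff.1 hmem).2 hg2)
          rw [← h1, ← h2, heq, hgg]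
        rw [← recon B1, ← recon B2, hBK, hBd]
      · exfalso; have h1 := e1b c11 c12; have h2 := e2c c21 c22; rw [heq] at h1; omega
      · exfalso; have h1 := e1c c11 c12; have h2 := e2b c21 c22; rw [heq] at h1; omega
      · -- both |M| = 2
        have ht1 := htrace B1 hB1 c11 c12
        have ht2 := htrace B2 hB2 c21 c22
        rw [phi, if_neg (by rw [← hK]; exact c11), if_neg (by rw [← hK]; exact c12)] at heq
        rw [phi, if_neg (by rw [← hK]; exact c21), if_neg (by rw [← hK]; exact c22)] at heq
        rw [← recon B1, ← recon B2, ht1, ht2, heq]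
  have key := card_le_card_of_injOn (phi t) hmaps hinj
  rwa [card_powersetCard, Nat.card_Icc, Nat.add_sub_cancel] at key




variable {n a : ℕ} {𝓕 : Finset (Finset ℕ)}

lemma mem_part1 {S : Finset ℕ} :
    S ∈ (𝓕.filter (fun A => n ∈ A)).image (fun A => A.erase n) ↔
      (n ∉ S ∧ insert n S ∈ 𝓕) := by
  constructor
  · rintro hS
    obtain ⟨A, hA, rfl⟩ := mem_image.1 hS
    rw [mem_filter] at hA
    exact ⟨notMem_erase _ _, by rw [insert_erase hA.2]; exact hA.1⟩
  · rintro ⟨h1, h2⟩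
    exact mem_image.2 ⟨insert n S, mem_filter.2 ⟨h2, mem_insert_self _ _⟩,
      by rw [erase_insert h1]⟩

lemma part_card_split :
    (𝓕.filter (fun A => n ∉ A)).card +
      ((𝓕.filter (fun A => n ∈ A)).image (fun A => A.erase n)).card = 𝓕.card := by
  have himg : ((𝓕.filter (fun A => n ∈ A)).image (fun A => A.erase n)).card =
      (𝓕.filter (fun A => n ∈ A)).card := by
    apply card_image_of_injOn
    intro A hA B hB heq
    rw [mem_coe, mem_filter] at hA hB
    simp only at heq
    have : insert n (A.erase n) = insert n (B.erase n) := by rw [heq]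
    rwa [insert_erase hA.2, insert_erase hB.2] at this
  rw [himg, add_comm]
  exact card_filter_add_card_filter_not _

lemma part0_cond (h : ∀ A ∈ 𝓕, A ⊆ Icc 1 n ∧ A.card = a) :
    ∀ A ∈ 𝓕.filter (fun A => n ∉ A), A ⊆ Icc 1 (n-1) ∧ A.card = a := by
  intro A hA
  rw [mem_filter] at hA
  obtain ⟨hsub, hcard⟩ := h A hA.1
  refine ⟨?_, hcard⟩
  intro x hx
  have h1 := mem_Icc.1 (hsub hx)
  have h2 : x ≠ n := fun h => hA.2 (h ▸ hx)
  rw [mem_Icc]; omega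

lemma part1_cond (h : ∀ A ∈ 𝓕, A ⊆ Icc 1 n ∧ A.card = a) :
    ∀ S ∈ (𝓕.filter (fun A => n ∈ A)).image (fun A => A.erase n),
      S ⊆ Icc 1 (n-1) ∧ S.card = a - 1 := by
  intro S hS
  obtain ⟨hnS, hins⟩ := mem_part1.1 hS
  obtain ⟨hsub, hcard⟩ := h _ hins
  constructor
  · intro x hx
    have h1 := mem_Icc.1 (hsub (mem_insert_of_mem hx))
    have h2 : x ≠ n := fun h => hnS (h ▸ hx)
    rw [mem_Icc]; omega
  · have : (insert n S).card = S.card + 1 := card_insert_of_notMem hnS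
    omega

lemma part0_shifted (hs : shifted 𝓕) (h : ∀ A ∈ 𝓕, A ⊆ Icc 1 n ∧ A.card = a) :
    shifted (𝓕.filter (fun A => n ∉ A)) := by
  intro A hA j hj i h1 hij hiA
  rw [mem_filter] at hA ⊢
  refine ⟨hs A hA.1 j hj i h1 hij hiA, ?_⟩
  have hjn : j ≤ n := (mem_Icc.1 ((h A hA.1).1 hj)).2
  have hjn' : j ≠ n := fun h => hA.2 (h ▸ hj)
  rw [mem_insert]
  rintro (h | h)
  · omega
  · exact hA.2 (mem_of_mem_erase h)

lemma part1_shifted (hs : shifted 𝓕) (h : ∀ A ∈ 𝓕, A ⊆ Icc 1 n ∧ A.card = a) :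
    shifted ((𝓕.filter (fun A => n ∈ A)).image (fun A => A.erase n)) := by
  intro S hS j hj i h1 hij hiS
  obtain ⟨hnS, hins⟩ := mem_part1.1 hS
  have hjn : j ≤ n - 1 := (mem_Icc.1 ((part1_cond h S hS).1 hj)).2
  have hn1 : 1 ≤ n := by
    by_contra hc
    have : n = 0 := by omega
    have := (mem_Icc.1 ((part1_cond h S hS).1 hj)).1
    have := (mem_Icc.1 ((part1_cond h S hS).1 hj)).2
    omega
  have hjne : j ≠ n := by omega
  have hine : i ≠ n := by omega
  have hmem : insert i ((insert n S).erase j) ∈ 𝓕 :=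
    hs _ hins j (mem_insert_of_mem hj) i h1 hij
      (by rw [mem_insert]; rintro (h | h); exact hine h; exact hiS h)
  rw [mem_part1]
  constructor
  · rw [mem_insert]
    rintro (h | h)
    · exact hine h.symm
    · exact hnS (mem_of_mem_erase h)
  · have : insert n (insert i (S.erase j)) = insert i ((insert n S).erase j) := by
      rw [erase_insert_of_ne hjne.symm]
      ext x
      simp only [mem_insert, mem_erase]
      tauto
    rwa [this]

lemma part0_nonempty (hs : shifted 𝓕) (h : ∀ A ∈ 𝓕, A ⊆ Icc 1 n ∧ A.card = a)
    (hne : 𝓕.Nonempty) (han : a + 2 ≤ n) :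
    (𝓕.filter (fun A => n ∉ A)).Nonempty := by
  obtain ⟨A, hA⟩ := hne
  by_cases hnA : n ∈ A
  · -- shift n down
    obtain ⟨hsub, hcard⟩ := h A hA
    have hcard' : (A.erase n).card = a - 1 := by rw [card_erase_of_mem hnA, hcard]
    have hlt : (A.erase n).card < (Icc 1 (n-1)).card := by
      rw [hcard', Nat.card_Icc]; omega
    have hex : ∃ x ∈ Icc 1 (n-1), x ∉ A.erase n := by
      by_contra hc
      push_neg at hc
      exact absurd (card_le_card hc) (by omega)
    obtain ⟨x, hx, hxA⟩ := hex
    rw [mem_Icc] at hx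
    have hxA' : x ∉ A := by
      intro hmem
      exact hxA (mem_erase.2 ⟨by omega, hmem⟩)
    have := hs A hA n hnA x hx.1 (by omega) hxA'
    rw [filter_nonempty_iff]
    refine ⟨_, this, ?_⟩
    rw [mem_insert]
    rintro (hc | hc)
    · omega
    · exact (notMem_erase _ _) hc
  · exact filter_nonempty_iff.2 ⟨A, hA, hnA⟩

theorem frankl_main : ∀ (n a b t : ℕ) (𝓐 𝓑 : Finset (Finset ℕ)), 1 ≤ t →
    (∀ A ∈ 𝓐, A ⊆ Icc 1 n ∧ A.card = a) →
    (∀ B ∈ 𝓑, B ⊆ Icc 1 n ∧ B.card = b) →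
    (∀ A ∈ 𝓐, ∀ B ∈ 𝓑, t ≤ (A ∩ B).card) →
    𝓐.Nonempty → 𝓑.Nonempty → shifted 𝓐 → shifted 𝓑 →
    𝓑.card ≤ n.choose (b - t) ∨ 𝓐.card ≤ n.choose (a - t - 1) := by
  intro n
  induction n using Nat.strong_induction_on with
  | _ n ih =>
  intro a b t 𝓐 𝓑 ht h𝓐 h𝓑 hcross hA𝓐 hB𝓑 hsA hsB
  obtain ⟨A₀, hA₀⟩ := hA𝓐
  obtain ⟨B₀, hB₀⟩ := hB𝓑
  have hta : t ≤ a := by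
    have h1 := hcross A₀ hA₀ B₀ hB₀
    have h2 : (A₀ ∩ B₀).card ≤ A₀.card := card_le_card inter_subset_left
    have h3 := (h𝓐 A₀ hA₀).2
    omega
  have htb : t ≤ b := by
    have h1 := hcross A₀ hA₀ B₀ hB₀
    have h2 : (A₀ ∩ B₀).card ≤ B₀.card := card_le_card inter_subset_right
    have h3 := (h𝓑 B₀ hB₀).2
    omega
  have han : a ≤ n := by
    have := card_le_card (h𝓐 A₀ hA₀).1
    rwa [(h𝓐 A₀ hA₀).2, Nat.card_Icc, Nat.add_sub_cancel] at this
  have hbn : b ≤ n := by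
    have := card_le_card (h𝓑 B₀ hB₀).1
    rwa [(h𝓑 B₀ hB₀).2, Nat.card_Icc, Nat.add_sub_cancel] at this
  by_cases hbase : n + t ≤ a + b
  · -- base case : all families are automatically cross-intersecting
    rcases le_or_gt a b with hab | hab
    · left
      calc 𝓑.card ≤ n.choose b := card_le_choose h𝓑
        _ = n.choose (n - b) := (Nat.choose_symm hbn).symm
        _ ≤ n.choose (b - t) := choose_le_choose_right (by omega) (by omega)
    · right
      calc 𝓐.card ≤ n.choose a := card_le_choose h𝓐
        _ = n.choose (n - a) := (Nat.choose_symm han).symm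
        _ ≤ n.choose (a - t - 1) := choose_le_choose_right (by omega) (by omega)
  · push_neg at hbase
    by_cases hat : a = t
    · -- every B ∈ 𝓑 contains A₀
      left
      have hAB : ∀ B ∈ 𝓑, A₀ ⊆ B := by
        intro B hB
        have h1 := hcross A₀ hA₀ B hB
        have h2 : (A₀ ∩ B).card ≤ A₀.card := card_le_card inter_subset_left
        have h3 := (h𝓐 A₀ hA₀).2
        have heq : A₀ ∩ B = A₀ := eq_of_subset_of_card_le inter_subset_left (by omega)
        intro x hx
        rw [← heq] at hx
        exact (mem_inter.1 hx).2
      have := card_le_choose_sub (W := A₀)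
        (fun B hB => ⟨(h𝓑 B hB).1, (h𝓑 B hB).2, hAB B hB⟩)
      rwa [(h𝓐 A₀ hA₀).2, hat] at this
    · by_cases hbt : b = t
      · rcases le_or_gt 𝓑.card 1 with h1 | h1
        · left
          have : n.choose (b - t) = 1 := by rw [hbt, Nat.sub_self, Nat.choose_zero_right]
          omega
        · right
          obtain ⟨B₁, hB₁, B₂, hB₂, hne12⟩ := one_lt_card.1 h1
          have hBA : ∀ Bx ∈ 𝓑, ∀ A ∈ 𝓐, Bx ⊆ A := by
            intro Bx hBx A hA
            have h1' := hcross A hA Bx hBx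
            have h2 : (A ∩ Bx).card ≤ Bx.card := card_le_card inter_subset_right
            have h3 := (h𝓑 Bx hBx).2
            have heq : A ∩ Bx = Bx := eq_of_subset_of_card_le inter_subset_right (by omega)
            intro x hx
            rw [← heq] at hx
            exact (mem_inter.1 hx).1
          have hU : ∀ A ∈ 𝓐, B₁ ∪ B₂ ⊆ A := by
            intro A hA
            exact union_subset (hBA B₁ hB₁ A hA) (hBA B₂ hB₂ A hA)
          have hUcard : t + 1 ≤ (B₁ ∪ B₂).card := by
            by_contra hc
            push_neg at hc
            have hs1 : B₁ ⊆ B₁ ∪ B₂ := subset_union_left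
            have hc1 := (h𝓑 B₁ hB₁).2
            have hc2 := (h𝓑 B₂ hB₂).2
            have heq1 : B₁ ∪ B₂ = B₁ := (eq_of_subset_of_card_le hs1 (by omega)).symm
            have : B₂ ⊆ B₁ := by
              intro x hx
              have : x ∈ B₁ ∪ B₂ := mem_union_right _ hx
              rwa [heq1] at this
            exact hne12 (eq_of_subset_of_card_le this (by omega)).symm
          obtain ⟨W, hWsub, hWcard⟩ := exists_subset_card_eq hUcard
          have hres := card_le_choose_sub (W := W)
            (fun A hA => ⟨(h𝓐 A hA).1, (h𝓐 A hA).2, hWsub.trans (hU A hA)⟩)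
          rwa [hWcard, Nat.sub_sub] at *
          
      · by_cases hat1 : a = t + 1
        · rcases le_or_gt 𝓐.card 1 with h1 | h1
          · right
            have : n.choose (a - t - 1) = 1 := by
              rw [hat1]
              simp
            omega
          · left
            obtain ⟨A₁, hA₁, A₂, hA₂, hne12⟩ := one_lt_card.1 h1
            have hsubA : ∀ S ∈ 𝓐, S ⊆ Icc 1 n := fun S hS => (h𝓐 S hS).1
            have hI : Icc 1 (t+1) ∈ 𝓐 := by
              have := shifted_icc_mem hsA hsubA hA₁
              rwa [(h𝓐 A₁ hA₁).2, hat1] at this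
            have hexA' : ∃ A' ∈ 𝓐, A' ≠ Icc 1 (t+1) := by
              rcases eq_or_ne A₁ (Icc 1 (t+1)) with h | h
              · exact ⟨A₂, hA₂, by rw [← h]; exact (Ne.symm hne12)⟩
              · exact ⟨A₁, hA₁, h⟩
            obtain ⟨A', hA', hA'ne⟩ := hexA'
            have hcA' : A'.card = t + 1 := by rw [(h𝓐 A' hA').2, hat1]
            have hexi : ∃ i₀, i₀ ∈ Icc 1 (t+1) ∧ i₀ ∉ A' := by
              by_contra hc
              push_neg at hc
              have hsub : Icc 1 (t+1) ⊆ A' := fun x hx => hc x hx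
              have : Icc 1 (t+1) = A' := eq_of_subset_of_card_le hsub
                (by rw [hcA', Nat.card_Icc]; omega)
              exact hA'ne this.symm
            obtain ⟨i₀, hi₀I, hi₀A'⟩ := hexi
            have hI' : (Icc 1 (t+2)).erase i₀ ∈ 𝓐 := by
              have := shifted_icc_erase_mem hsA hsubA hA'
                (by rw [hcA']; exact Icc_subset_Icc_right (by omega) hi₀I) hi₀A'
              rwa [hcA'] at this
            have hn2 : t + 2 ≤ n := by omega
            exact special_card_bound ht hn2 hi₀I h𝓑
              (fun B hB => hcross _ hI B hB)
              (fun B hB => hcross _ hI' B hB)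
        · -- main inductive step
          have hat2 : t + 2 ≤ a := by omega
          have hbt1 : t + 1 ≤ b := by omega
          have han2 : a + 2 ≤ n := by omega
          have hbn2 : b + 2 ≤ n := by omega
          have hn1 : 1 ≤ n := by omega
          set 𝓐₀ := 𝓐.filter (fun A => n ∉ A) with h𝓐₀d
          set 𝓐₁ := (𝓐.filter (fun A => n ∈ A)).image (fun A => A.erase n) with h𝓐₁d
          set 𝓑₀ := 𝓑.filter (fun A => n ∉ A) with h𝓑₀d
          set 𝓑₁ := (𝓑.filter (fun A => n ∈ A)).image (fun A => A.erase n) with h𝓑₁d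
          have hA0c : ∀ A ∈ 𝓐₀, A ⊆ Icc 1 (n-1) ∧ A.card = a := part0_cond h𝓐
          have hA1c : ∀ S ∈ 𝓐₁, S ⊆ Icc 1 (n-1) ∧ S.card = a - 1 := part1_cond h𝓐
          have hB0c : ∀ B ∈ 𝓑₀, B ⊆ Icc 1 (n-1) ∧ B.card = b := part0_cond h𝓑
          have hB1c : ∀ S ∈ 𝓑₁, S ⊆ Icc 1 (n-1) ∧ S.card = b - 1 := part1_cond h𝓑
          have hA0s : shifted 𝓐₀ := part0_shifted hsA h𝓐
          have hA1s : shifted 𝓐₁ := part1_shifted hsA h𝓐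
          have hB0s : shifted 𝓑₀ := part0_shifted hsB h𝓑
          have hB1s : shifted 𝓑₁ := part1_shifted hsB h𝓑
          have hA0ne : 𝓐₀.Nonempty := part0_nonempty hsA h𝓐 ⟨A₀, hA₀⟩ han2
          have hB0ne : 𝓑₀.Nonempty := part0_nonempty hsB h𝓑 ⟨B₀, hB₀⟩ hbn2
          -- membership helpers
          have hA0mem : ∀ A ∈ 𝓐₀, A ∈ 𝓐 ∧ n ∉ A := fun A hA => by
            rw [h𝓐₀d, mem_filter] at hA; exact hA
          have hB0mem : ∀ B ∈ 𝓑₀, B ∈ 𝓑 ∧ n ∉ B := fun B hB => by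
            rw [h𝓑₀d, mem_filter] at hB; exact hB
          -- cross conditions
          have c00 : ∀ A ∈ 𝓐₀, ∀ B ∈ 𝓑₀, t ≤ (A ∩ B).card := fun A hA B hB =>
            hcross A (hA0mem A hA).1 B (hB0mem B hB).1
          have c01 : ∀ A ∈ 𝓐₀, ∀ S ∈ 𝓑₁, t ≤ (A ∩ S).card := by
            intro A hA S hS
            obtain ⟨hnS, hins⟩ := mem_part1.1 hS
            have := hcross A (hA0mem A hA).1 _ hins
            have heq : A ∩ insert n S = A ∩ S := by
              rw [inter_insert_of_notMem (hA0mem A hA).2]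
            rwa [heq] at this
          have c10 : ∀ S ∈ 𝓐₁, ∀ B ∈ 𝓑₀, t ≤ (S ∩ B).card := by
            intro S hS B hB
            obtain ⟨hnS, hins⟩ := mem_part1.1 hS
            have := hcross _ hins B (hB0mem B hB).1
            have heq : insert n S ∩ B = S ∩ B := by
              rw [insert_inter_of_notMem (hB0mem B hB).2]
            rwa [heq] at this
          have c11 : ∀ S ∈ 𝓐₁, ∀ R ∈ 𝓑₁, t ≤ (S ∩ R).card := by
            intro S hS R hR
            obtain ⟨hnS, hinsS⟩ := mem_part1.1 hS
            obtain ⟨hnR, hinsR⟩ := mem_part1.1 hR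
            by_contra hc
            push_neg at hc
            have hcr := hcross _ hinsS _ hinsR
            have heq : insert n S ∩ insert n R = insert n (S ∩ R) := by
              ext x; simp only [mem_inter, mem_insert]; tauto
            have hcard : (insert n S ∩ insert n R).card = (S ∩ R).card + 1 := by
              rw [heq, card_insert_of_notMem (fun h => hnS (mem_of_mem_inter_left h))]
            have hSR : (S ∩ R).card = t - 1 := by omega
            -- find x ∉ (insert n S) ∪ (insert n R) in Icc 1 (n-1)
            have hcardS : S.card = a - 1 := (hA1c S hS).2
            have hcardR : R.card = b - 1 := (hB1c R hR).2
            have hucard : ((insert n S) ∪ (insert n R)).card + t = a + b := by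
              have h1 := card_union_add_card_inter (insert n S) (insert n R)
              have h2 : (insert n S).card = a := by
                rw [card_insert_of_notMem hnS]; omega
              have h3 : (insert n R).card = b := by
                rw [card_insert_of_notMem hnR]; omega
              omega
            have hsubU : (insert n S) ∪ (insert n R) ⊆ Icc 1 n := by
              intro x hx
              rcases mem_union.1 hx with h | h
              · rcases mem_insert.1 h with rfl | h
                · rw [mem_Icc]; omega
                · exact Icc_subset_Icc_right (by omega) ((hA1c S hS).1 h)
              · rcases mem_insert.1 h with rfl | h
                · rw [mem_Icc]; omega
                · exact Icc_subset_Icc_right (by omega) ((hB1c R hR).1 h)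
            have hex : ∃ x ∈ Icc 1 (n-1), x ∉ (insert n S) ∪ (insert n R) := by
              by_contra hc2
              push_neg at hc2
              have hsub2 : Icc 1 (n-1) ⊆ ((insert n S) ∪ (insert n R)).erase n := by
                intro x hx
                rw [mem_erase]
                have := mem_Icc.1 hx
                exact ⟨by omega, hc2 x hx⟩
              have hcard2 := card_le_card hsub2
              rw [card_erase_of_mem (mem_union_left _ (mem_insert_self _ _)),
                Nat.card_Icc] at hcard2
              omega
            obtain ⟨x, hxI, hxU⟩ := hex
            have hx1 : 1 ≤ x := (mem_Icc.1 hxI).1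
            have hxn : x < n := by have := (mem_Icc.1 hxI).2; omega
            have hxR : x ∉ insert n R := fun h => hxU (mem_union_right _ h)
            have hshift := hsB _ hinsR n (mem_insert_self _ _) x hx1 hxn hxR
            have hcr2 := hcross _ hinsS _ hshift
            have heq2 : insert n S ∩ insert x ((insert n R).erase n) =
                S ∩ R := by
              rw [erase_insert hnR]
              ext z
              simp only [mem_inter, mem_insert]
              constructor
              · rintro ⟨hz1, hz2 | hz2⟩
                · exfalso
                  subst hz2
                  rcases hz1 with rfl | hz1
                  · omega
                  · exact hxU (mem_union_left _ (mem_insert_of_mem hz1))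
                · rcases hz1 with rfl | hz1
                  · exact absurd hz2 hnR
                  · exact ⟨hz1, hz2⟩
              · rintro ⟨hz1, hz2⟩
                exact ⟨Or.inr hz1, Or.inr hz2⟩
            rw [heq2] at hcr2
            omega
          -- nonemptiness of the ones
          have hA1ne_of : (𝓐.filter (fun A => n ∈ A)).Nonempty → 𝓐₁.Nonempty := by
            rintro ⟨A, hA⟩
            exact ⟨A.erase n, mem_image_of_mem _ hA⟩
          -- the four IH propositions
          have P1 : 𝓑₀.card ≤ (n-1).choose (b - t) ∨ 𝓐₀.card ≤ (n-1).choose (a - t - 1) :=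
            ih (n-1) (by omega) a b t 𝓐₀ 𝓑₀ ht hA0c hB0c c00 hA0ne hB0ne hA0s hB0s
          have P2 : 𝓑₁.card ≤ (n-1).choose (b - t - 1) ∨ 𝓐₁.card ≤ (n-1).choose (a - t - 2) := by
            rcases eq_or_ne 𝓑₁ ∅ with hB1e | hB1e
            · left; rw [hB1e, card_empty]; exact Nat.zero_le _
            · rcases eq_or_ne 𝓐₁ ∅ with hA1e | hA1e
              · right; rw [hA1e, card_empty]; exact Nat.zero_le _
              · have := ih (n-1) (by omega) (a-1) (b-1) t 𝓐₁ 𝓑₁ ht hA1c hB1c c11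
                  (nonempty_iff_ne_empty.2 hA1e) (nonempty_iff_ne_empty.2 hB1e) hA1s hB1s
                rcases this with h | h
                · left
                  have : b - 1 - t = b - t - 1 := by omega
                  rwa [this] at h
                · right
                  have : a - 1 - t - 1 = a - t - 2 := by omega
                  rwa [this] at h
          have P3 : 𝓑₁.card ≤ (n-1).choose (b - t - 1) ∨ 𝓐₀.card ≤ (n-1).choose (a - t - 1) := by
            rcases eq_or_ne 𝓑₁ ∅ with hB1e | hB1e
            · left; rw [hB1e, card_empty]; exact Nat.zero_le _
            · have := ih (n-1) (by omega) a (b-1) t 𝓐₀ 𝓑₁ ht hA0c hB1c c01 hA0ne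
                (nonempty_iff_ne_empty.2 hB1e) hA0s hB1s
              rcases this with h | h
              · left
                have : b - 1 - t = b - t - 1 := by omega
                rwa [this] at h
              · right; exact h
          have P4 : 𝓑₀.card ≤ (n-1).choose (b - t) ∨ 𝓐₁.card ≤ (n-1).choose (a - t - 2) := by
            rcases eq_or_ne 𝓐₁ ∅ with hA1e | hA1e
            · right; rw [hA1e, card_empty]; exact Nat.zero_le _
            · have := ih (n-1) (by omega) (a-1) b t 𝓐₁ 𝓑₀ ht hA1c hB0c c10
                (nonempty_iff_ne_empty.2 hA1e) hB0ne hA1s hB0s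
              rcases this with h | h
              · left; exact h
              · right
                have : a - 1 - t - 1 = a - t - 2 := by omega
                rwa [this] at h
          -- combine
          have hPascalB : (n-1).choose (b - t) + (n-1).choose (b - t - 1) = n.choose (b - t) := by
            obtain ⟨m, hm⟩ : ∃ m, n = m + 1 := ⟨n-1, by omega⟩
            obtain ⟨k, hk⟩ : ∃ k, b - t = k + 1 := ⟨b-t-1, by omega⟩
            subst hm
            have e0 : m + 1 - 1 = m := by omega
            have e1 : k + 1 - 1 = k := by omega
            rw [hk, e0, e1, Nat.choose_succ_succ]
            simp only [Nat.succ_eq_add_one]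
            omega
          have hPascalA : (n-1).choose (a - t - 1) + (n-1).choose (a - t - 2) =
              n.choose (a - t - 1) := by
            obtain ⟨m, hm⟩ : ∃ m, n = m + 1 := ⟨n-1, by omega⟩
            obtain ⟨k, hk⟩ : ∃ k, a - t = k + 2 := ⟨a-t-2, by omega⟩
            subst hm
            have e0 : m + 1 - 1 = m := by omega
            have e1 : k + 2 - 1 = k + 1 := by omega
            have e2 : k + 2 - 2 = k := by omega
            rw [hk, e0, e1, e2, Nat.choose_succ_succ]
            simp only [Nat.succ_eq_add_one]
            omega
          have hcardA : 𝓐₀.card + 𝓐₁.card = 𝓐.card := part_card_split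
          have hcardB : 𝓑₀.card + 𝓑₁.card = 𝓑.card := part_card_split
          rcases P1 with hB0small | hA0small
          · rcases P2 with hB1small | hA1small
            · left; omega
            · rcases P3 with hB1small | hA0small
              · left; omega
              · rcases P4 with hB0small2 | hA1small2
                · -- A0 small, A1 small
                  right; omega
                · right; omega
          · rcases P2 with hB1small | hA1small
            · rcases P4 with hB0small | hA1small
              · left; omega
              · right; omega
            · rcases P3 with hB1small | hA0small2
              · rcases P4 with hB0small | hA1small2
                · left; omega
                · right; omega
              · right; omega


end Frankl19

theorem stmt_19 (n k t : ℕ) (𝓐 𝓑 : Finset (Finset ℕ))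
    (h𝓐 : ∀ A ∈ 𝓐, A ⊆ Finset.Icc 1 n ∧ A.card = k)
    (h𝓑 : ∀ B ∈ 𝓑, B ⊆ Finset.Icc 1 n ∧ B.card = k)
    (cross : ∀ A ∈ 𝓐, ∀ B ∈ 𝓑, t ≤ (A ∩ B).card)
    (hAB : 𝓐.card ≤ 𝓑.card) :
    𝓑.card ≤ n.choose (k - t) ∨ 𝓐.card ≤ n.choose (k - t - 1) := by
  classical
  rcases Nat.eq_zero_or_pos t with ht0 | ht
  · left
    subst ht0
    simpa using Frankl19.card_le_choose h𝓑
  · rcases eq_or_ne 𝓐 ∅ with hAe | hAe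
    · right; rw [hAe]; simp
    · rcases eq_or_ne 𝓑 ∅ with hBe | hBe
      · left; rw [hBe]; simp
      · obtain ⟨𝓐', 𝓑', c1, c2, c3, c4, c5, c6, c7⟩ :=
          Frankl19.exists_shifted n k k t
            (Frankl19.fmeasure 𝓐 + Frankl19.fmeasure 𝓑) 𝓐 𝓑 le_rfl h𝓐 h𝓑 cross
        have hA'ne : 𝓐'.Nonempty := by
          rw [← Finset.card_pos, c4, Finset.card_pos]
          exact Finset.nonempty_iff_ne_empty.2 hAe
        have hB'ne : 𝓑'.Nonempty := by
          rw [← Finset.card_pos, c5, Finset.card_pos]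
          exact Finset.nonempty_iff_ne_empty.2 hBe
        rcases Frankl19.frankl_main n k k t 𝓐' 𝓑' ht c1 c2 c3 hA'ne hB'ne c6 c7 with h | h
        · left; rwa [c5] at h
        · right; rwa [c4] at h
end
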